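/- arXiv:1901.03264 — 9 statements merged into one kernel-verified Lean document; each statement's English description precedes it below -/
import Mathlib

section
/- (Tijdeman's Number of Zeros Lemma) Let R > 0, t > 0 and s > 1, and let f be a complex-valued function that is analytic on an open set containing the closed disc {z ∈ ℂ : |z| ≤ (st+s+t)R} and is not identically zero there. Then the number of distinct zeros of f in the closed disc {|z| ≤ R} is at most (1/log s)·(log max_{|z| ≤ (st+s+t)R} |f(z)| − log max_{|z| ≤ tR} |f(z)|). -/
/-!
Write `M(a) = max_{|z| ≤ a} |f z|`, `ρ = (st+s+t)R` and `r = tR`. Divide out the zeros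
`w₁, …, wₙ` of `f` in `|z| ≤ R` and multiply back the Blaschke-type factors `ρ² - w̄ z`: the
resulting `G` is analytic with `|G| = ρⁿ|f|` on `|z| = ρ`, so by the maximum modulus principle
`|G(z₀)| ≤ ρⁿ M(ρ)` at a point `|z₀| ≤ r` where `|f z₀| = M(r)`. There each factor has
`|ρ² - w̄ z₀| ≥ ρ² - Rr ≥ sρ(R + r)` while `|z₀ - w| ≤ R + r`, whence `M(r) sⁿ ≤ M(ρ)`.
-/

open Set Metric Finset ComplexConjugate

theorem AnalyticOnNhd.dslope {𝕜 E : Type*} [NontriviallyNormedField 𝕜] [NormedAddCommGroup E]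
    [NormedSpace 𝕜 E] {f : 𝕜 → E} {U : Set 𝕜} (hf : AnalyticOnNhd 𝕜 f U) (w : 𝕜) :
    AnalyticOnNhd 𝕜 (_root_.dslope f w) U := by
  intro z hz
  rcases eq_or_ne z w with rfl | hzw
  · obtain ⟨p, hp⟩ := hf z hz
    exact hp.has_fpower_series_dslope_fslope.analyticAt
  · have hslope : AnalyticAt 𝕜 (fun u => (u - w)⁻¹ • (f u - f w)) z :=
      ((analyticAt_id.sub analyticAt_const).inv (sub_ne_zero.2 hzw)).smul
        ((hf z hz).sub analyticAt_const)
    refine hslope.congr ?_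
    filter_upwards [isOpen_ne.mem_nhds hzw] with u hu
    rw [dslope_of_ne f hu, slope_def_module]

theorem AnalyticOnNhd.exists_eq_mul_prod_sub {𝕜 : Type*} [NontriviallyNormedField 𝕜]
    {f : 𝕜 → 𝕜} {U : Set 𝕜} (hf : AnalyticOnNhd 𝕜 f U) (Z : Finset 𝕜) (hZ : ∀ w ∈ Z, f w = 0) :
    ∃ g : 𝕜 → 𝕜, AnalyticOnNhd 𝕜 g U ∧ ∀ z, f z = g z * ∏ w ∈ Z, (z - w) := by
  classical
  induction Z using Finset.induction generalizing f with
  | empty => exact ⟨f, hf, by simp⟩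
  | @insert a Z haZ ih =>
    have hfa : f a = 0 := hZ a (mem_insert_self a Z)
    obtain ⟨g, hg, hfg⟩ := ih (hf.dslope a) fun w hw => by
      have hwa : w ≠ a := ne_of_mem_of_not_mem hw haZ
      rw [dslope_of_ne f hwa, slope_def_field, hZ w (mem_insert_of_mem hw), hfa, sub_self,
        zero_div]
    refine ⟨g, hg, fun z => ?_⟩
    have hf_eq : (z - a) * _root_.dslope f a z = f z := by
      simpa [hfa] using sub_smul_dslope f a z
    rw [← hf_eq, hfg z, prod_insert haZ]
    ring

theorem AnalyticOnNhd.finite_zeros_of_isCompact {𝕜 E : Type*} [NontriviallyNormedField 𝕜]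
    [NormedAddCommGroup E] [NormedSpace 𝕜 E] {f : 𝕜 → E} {U K : Set 𝕜}
    (hf : AnalyticOnNhd 𝕜 f U) (hU : IsPreconnected U) (hf0 : ¬EqOn f 0 U) (hK : IsCompact K)
    (hKU : K ⊆ U) : {z ∈ K | f z = 0}.Finite := by
  have hne : ∀ᶠ z in Filter.codiscreteWithin K, f z ≠ 0 :=
    Filter.codiscreteWithin_mono hKU
      ((hf.eqOn_zero_or_eventually_ne_zero_of_preconnected hU).resolve_left hf0)
  convert hK.finite_sdiff_of_mem_codiscreteWithin hne using 1
  ext z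
  simp

theorem AnalyticOnNhd.exists_ne_zero_of_mem_nhds {𝕜 E : Type*} [NontriviallyNormedField 𝕜]
    [NormedAddCommGroup E] [NormedSpace 𝕜 E] {f : 𝕜 → E} {U S : Set 𝕜} {z₀ : 𝕜}
    (hf : AnalyticOnNhd 𝕜 f U) (hU : IsPreconnected U) (hf0 : ¬EqOn f 0 U) (hz₀ : z₀ ∈ U)
    (hS : S ∈ nhds z₀) : ∃ z ∈ S, f z ≠ 0 := by
  by_contra! h
  exact hf0 (hf.eqOn_zero_of_preconnected_of_eventuallyEq_zero hU hz₀ (Filter.mem_of_superset hS h))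

theorem AnalyticOnNhd.exists_pos_norm_eq_sSup_image_closedBall {E : Type*}
    [NormedAddCommGroup E] [NormedSpace ℂ E] {f : ℂ → E} {ρ r : ℝ}
    (hf : AnalyticOnNhd ℂ f (closedBall 0 ρ)) (hf0 : ¬EqOn f 0 (closedBall 0 ρ)) (hr : 0 < r)
    (hrρ : r ≤ ρ) :
    ∃ z₀ ∈ closedBall 0 r, sSup ((fun z => ‖f z‖) '' closedBall 0 r) = ‖f z₀‖ ∧ 0 < ‖f z₀‖ := by
  have hcont : ContinuousOn (fun z => ‖f z‖) (closedBall 0 r) :=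
    (hf.continuousOn.mono (closedBall_subset_closedBall hrρ)).norm
  obtain ⟨z₀, hz₀, hMr⟩ :=
    (isCompact_closedBall (0 : ℂ) r).exists_sSup_image_eq (nonempty_closedBall.2 hr.le) hcont
  obtain ⟨z₁, hz₁, hfz₁⟩ := hf.exists_ne_zero_of_mem_nhds (convex_closedBall 0 ρ).isPreconnected
    hf0 (mem_closedBall_self (hr.le.trans hrρ)) (closedBall_mem_nhds 0 hr)
  refine ⟨z₀, hz₀, hMr, ?_⟩
  rw [← hMr]
  exact (norm_pos_iff.2 hfz₁).trans_le
    (le_csSup ((isCompact_closedBall 0 r).bddAbove_image hcont) (mem_image_of_mem _ hz₁))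

theorem norm_sq_sub_conj_mul_of_norm_eq {z w : ℂ} {ρ : ℝ} (hz : ‖z‖ = ρ) :
    ‖(ρ : ℂ) ^ 2 - conj w * z‖ = ρ * ‖z - w‖ := by
  have hρ : (ρ : ℂ) ^ 2 = z * conj z := by
    rw [Complex.mul_conj, Complex.normSq_eq_norm_sq, hz]
    push_cast; ring
  rw [hρ, show z * conj z - conj w * z = z * conj (z - w) by rw [map_sub]; ring, norm_mul,
    Complex.norm_conj, hz]

section BlaschkeFactors

variable {f : ℂ → ℂ} {U : Set ℂ} {ρ M : ℝ} {Z : Finset ℂ} {z₀ : ℂ}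

theorem norm_mul_prod_le_of_forall_mem_sphere (hf : AnalyticOnNhd ℂ f U) (hρ : 0 < ρ)
    (hsub : closedBall 0 ρ ⊆ U) (hZ : ∀ w ∈ Z, f w = 0) (hM : ∀ z ∈ sphere 0 ρ, ‖f z‖ ≤ M)
    (hz₀ : z₀ ∈ closedBall 0 ρ) :
    ‖f z₀‖ * ∏ w ∈ Z, ‖(ρ : ℂ) ^ 2 - conj w * z₀‖ ≤ ρ ^ #Z * M * ∏ w ∈ Z, ‖z₀ - w‖ := by
  obtain ⟨g, hg, hfg⟩ := hf.exists_eq_mul_prod_sub Z hZ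
  set G : ℂ → ℂ := fun z => g z * ∏ w ∈ Z, ((ρ : ℂ) ^ 2 - conj w * z)
  have hG : DiffContOnCl ℂ G (ball 0 ρ) := by
    have hGU : AnalyticOnNhd ℂ G U := hg.mul fun z _ =>
      Finset.analyticAt_fun_prod Z fun w _ =>
        analyticAt_const.sub (analyticAt_const.mul analyticAt_id)
    rw [← closure_ball 0 hρ.ne'] at hsub
    exact ⟨(hGU.mono (subset_closure.trans hsub)).differentiableOn, hGU.continuousOn.mono hsub⟩
  have hG_sphere : ∀ z ∈ frontier (ball (0 : ℂ) ρ), ‖G z‖ ≤ ρ ^ #Z * M := by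
    intro z hz
    rw [frontier_ball 0 hρ.ne'] at hz
    have hzρ : ‖z‖ = ρ := by simpa using hz
    calc ‖G z‖ = ρ ^ #Z * ‖f z‖ := by
          simp only [G, hfg z, norm_mul, norm_prod, norm_sq_sub_conj_mul_of_norm_eq hzρ,
            prod_mul_distrib, prod_const]
          ring
      _ ≤ ρ ^ #Z * M := by gcongr; exact hM z hz
  have hGz₀ : ‖G z₀‖ ≤ ρ ^ #Z * M :=
    Complex.norm_le_of_forall_mem_frontier_norm_le isBounded_ball hG hG_sphere
      (by rwa [closure_ball 0 hρ.ne'])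
  calc ‖f z₀‖ * ∏ w ∈ Z, ‖(ρ : ℂ) ^ 2 - conj w * z₀‖ = ‖G z₀‖ * ∏ w ∈ Z, ‖z₀ - w‖ := by
        simp only [G, hfg z₀, norm_mul, norm_prod]
        ring
    _ ≤ ρ ^ #Z * M * ∏ w ∈ Z, ‖z₀ - w‖ := by gcongr

theorem norm_mul_pow_le_of_forall_mem_sphere {R r q : ℝ} (hf : AnalyticOnNhd ℂ f U)
    (hρ : 0 < ρ) (hsub : closedBall 0 ρ ⊆ U) (hZ : ∀ w ∈ Z, ‖w‖ ≤ R ∧ f w = 0)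
    (hM : ∀ z ∈ sphere 0 ρ, ‖f z‖ ≤ M) (hz₀ : ‖z₀‖ ≤ r) (hrρ : r ≤ ρ) (hRr : 0 < R + r)
    (hq : 0 ≤ q) (hqρ : q * (ρ * (R + r)) ≤ ρ ^ 2 - R * r) :
    ‖f z₀‖ * q ^ #Z ≤ M := by
  have hM0 : 0 ≤ M := by
    obtain ⟨z, hz⟩ : (sphere (0 : ℂ) ρ).Nonempty := NormedSpace.sphere_nonempty.2 hρ.le
    exact (norm_nonneg _).trans (hM z hz)
  have hfactor_ge : ∀ w ∈ Z, q * (ρ * (R + r)) ≤ ‖(ρ : ℂ) ^ 2 - conj w * z₀‖ := by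
    intro w hw
    have hwz₀ : ‖conj w * z₀‖ ≤ R * r := by
      rw [norm_mul, Complex.norm_conj]
      exact mul_le_mul (hZ w hw).1 hz₀ (norm_nonneg _) ((norm_nonneg _).trans (hZ w hw).1)
    have hρ2 : ‖(ρ : ℂ) ^ 2‖ = ρ ^ 2 := by simp
    linarith [norm_sub_norm_le ((ρ : ℂ) ^ 2) (conj w * z₀)]
  have hdist_le : ∀ w ∈ Z, ‖z₀ - w‖ ≤ R + r := fun w hw => by
    linarith [norm_sub_le z₀ w, (hZ w hw).1]
  have hz₀ρ : z₀ ∈ closedBall 0 ρ := mem_closedBall_zero_iff.2 (hz₀.trans hrρ)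
  have hbound := norm_mul_prod_le_of_forall_mem_sphere hf hρ hsub (fun w hw => (hZ w hw).2) hM hz₀ρ
  refine le_of_mul_le_mul_right ?_ (pow_pos (mul_pos hρ hRr) #Z)
  calc ‖f z₀‖ * q ^ #Z * (ρ * (R + r)) ^ #Z = ‖f z₀‖ * ∏ _w ∈ Z, q * (ρ * (R + r)) := by
        rw [prod_const, mul_assoc, ← mul_pow]
    _ ≤ ‖f z₀‖ * ∏ w ∈ Z, ‖(ρ : ℂ) ^ 2 - conj w * z₀‖ := by
        gcongr with w hw
        exact hfactor_ge w hw
    _ ≤ ρ ^ #Z * M * ∏ w ∈ Z, ‖z₀ - w‖ := hbound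
    _ ≤ ρ ^ #Z * M * ∏ _w ∈ Z, (R + r) := by gcongr with w hw; exact hdist_le w hw
    _ = M * (ρ * (R + r)) ^ #Z := by rw [prod_const, mul_pow]; ring

end BlaschkeFactors

theorem natCast_le_div_log_of_mul_pow_le {a b s : ℝ} {n : ℕ} (ha : 0 < a) (hs : 1 < s)
    (h : a * s ^ n ≤ b) : (n : ℝ) ≤ 1 / Real.log s * (Real.log b - Real.log a) := by
  have hsn : 0 < s ^ n := pow_pos (by linarith) n
  have hlog := Real.log_le_log (mul_pos ha hsn) h
  rw [Real.log_mul ha.ne' hsn.ne', Real.log_pow] at hlog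
  rw [one_div_mul_eq_div, le_div_iff₀ (Real.log_pos hs)]
  linarith

theorem stmt_2_general (R s t : ℝ) (hR : 0 < R) (ht : 0 < t) (hs : 1 < s)
    (f : ℂ → ℂ) (U : Set ℂ)
    (hsub : Metric.closedBall (0 : ℂ) ((s * t + s + t) * R) ⊆ U)
    (hf : AnalyticOnNhd ℂ f U)
    (hne : ∃ z ∈ Metric.closedBall (0 : ℂ) ((s * t + s + t) * R), f z ≠ 0) :
    {z ∈ Metric.closedBall (0 : ℂ) R | f z = 0}.Finite ∧
    ({z ∈ Metric.closedBall (0 : ℂ) R | f z = 0}.ncard : ℝ) ≤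
      (1 / Real.log s) *
        (Real.log (sSup ((fun z => ‖f z‖) ''
            Metric.closedBall (0 : ℂ) ((s * t + s + t) * R))) -
         Real.log (sSup ((fun z => ‖f z‖) ''
            Metric.closedBall (0 : ℂ) (t * R)))) := by
  set ρ := (s * t + s + t) * R
  set r := t * R
  have hr : 0 < r := mul_pos ht hR
  have hRρ : R ≤ ρ := by nlinarith
  have hrρ : r ≤ ρ := by nlinarith
  have hfρ : AnalyticOnNhd ℂ f (closedBall 0 ρ) := hf.mono hsub
  have hf0 : ¬EqOn f 0 (closedBall 0 ρ) := fun h => hne.elim fun _ ⟨hz, hfz⟩ => hfz (h hz)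
  have hρconn : IsPreconnected (closedBall (0 : ℂ) ρ) := (convex_closedBall 0 ρ).isPreconnected
  have hfin := hfρ.finite_zeros_of_isCompact hρconn hf0 (isCompact_closedBall 0 R)
    (closedBall_subset_closedBall hRρ)
  refine ⟨hfin, ?_⟩
  obtain ⟨z₀, hz₀, hMr, hMr_pos⟩ :=
    hfρ.exists_pos_norm_eq_sSup_image_closedBall hf0 hr hrρ
  have hMρ : ∀ z ∈ sphere (0 : ℂ) ρ, ‖f z‖ ≤ sSup ((fun z => ‖f z‖) '' closedBall 0 ρ) :=
    fun z hz => le_csSup ((isCompact_closedBall 0 ρ).bddAbove_image hfρ.continuousOn.norm)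
      (mem_image_of_mem _ (sphere_subset_closedBall hz))
  have hsρ : s * (ρ * (R + r)) ≤ ρ ^ 2 - R * r := by
    have hρ_sub : ρ - s * (R + r) = r := by ring
    nlinarith [mul_nonneg hr.le (sub_nonneg.2 hRρ)]
  have key := norm_mul_pow_le_of_forall_mem_sphere (Z := hfin.toFinset) hf (by positivity) hsub
    (fun w hw => by simpa using hfin.mem_toFinset.1 hw) hMρ (mem_closedBall_zero_iff.1 hz₀) hrρ
    (by positivity) (by positivity) hsρ
  rw [ncard_eq_toFinset_card _ hfin, hMr]
  exact natCast_le_div_log_of_mul_pow_le hMr_pos hs key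

/-- Tijdeman's Number of Zeros Lemma: if `f` is analytic on an open set
containing the closed disc of radius `(st+s+t)R` and not identically zero there, then the
number of its distinct zeros in the closed disc of radius `R` is at most
`(1/log s) (log max_{|z| ≤ (st+s+t)R} |f(z)| − log max_{|z| ≤ tR} |f(z)|)`. -/
theorem stmt_2 (R s t : ℝ) (hR : 0 < R) (ht : 0 < t) (hs : 1 < s)
    (f : ℂ → ℂ) (U : Set ℂ) (hU : IsOpen U)
    (hsub : Metric.closedBall (0 : ℂ) ((s * t + s + t) * R) ⊆ U)
    (hf : AnalyticOnNhd ℂ f U)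
    (hne : ∃ z ∈ Metric.closedBall (0 : ℂ) ((s * t + s + t) * R), f z ≠ 0) :
    {z ∈ Metric.closedBall (0 : ℂ) R | f z = 0}.Finite ∧
    ({z ∈ Metric.closedBall (0 : ℂ) R | f z = 0}.ncard : ℝ) ≤
      (1 / Real.log s) *
        (Real.log (sSup ((fun z => ‖f z‖) ''
            Metric.closedBall (0 : ℂ) ((s * t + s + t) * R))) -
         Real.log (sSup ((fun z => ‖f z‖) ''
            Metric.closedBall (0 : ℂ) (t * R)))) :=
  stmt_2_general R s t hR ht hs f U hsub hf hne
end

section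
/- Let n ≥ 1, let u₁ < u₂ < ⋯ < u_n be distinct real numbers, let a₁, …, a_n be strictly positive reals, and let a₀ > 0. Then the function f(y) = Σ_{i=1}^n a_i exp(−(y − u_i)²/2) − a₀ has at most 2n real zeros, i.e., the cardinality of {y ∈ ℝ : f(y) = 0} is at most 2n. -/
/-!
Multiplying `f` by `exp (y ^ 2 / 2)` turns it into `∑ cᵢ exp (uᵢ y) + p(y) exp (y ^ 2 / 2)` with
`cᵢ = aᵢ exp (-uᵢ ^ 2 / 2)` and `p` the constant polynomial `-a₀`. Multiplying such a function by
`exp (-uⱼ y)` makes the `j`-th exponential constant; differentiating removes it and replaces `p`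
by `p' + (y - uⱼ) p`, whose degree is one larger. By Rolle's theorem this loses at most one zero,
so by induction on the number `k` of exponentials there are at most `2k + deg p` zeros; for
`k = 0` the zeros are the roots of `p`.
-/

open Real Set Polynomial

theorem encard_setOf_eq_zero_le_deriv_add_one {f : ℝ → ℝ} (hf : Continuous f) :
    {x | f x = 0}.encard ≤ {x | deriv f x = 0}.encard + 1 := by
  rcases {x | deriv f x = 0}.finite_or_infinite with hT | hT
  · have hcard : ∀ s : Finset ℝ, ↑s ⊆ {x | f x = 0} → s.card ≤ hT.toFinset.card + 1 :=
      fun s hs => Finset.card_le_of_interleaved fun x hx y hy hxy _ => by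
        obtain ⟨z, hz, hz'⟩ :=
          exists_deriv_eq_zero hxy hf.continuousOn ((hs hx).trans (hs hy).symm)
        exact ⟨z, hT.mem_toFinset.2 hz', hz⟩
    have hS : {x | f x = 0}.Finite := by
      by_contra hS
      obtain ⟨s, hs, hs_card⟩ := Set.Infinite.exists_subset_card_eq hS (hT.toFinset.card + 2)
      have := hcard s hs
      omega
    rw [hS.encard_eq_coe_toFinset_card, hT.encard_eq_coe_toFinset_card]
    exact_mod_cast hcard _ hS.coe_toFinset.subset
  · simp [hT.encard_eq]

theorem natDegree_derivative_add_X_sub_C_mul {R : Type*} [CommRing R] [IsDomain R]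
    {p : R[X]} (hp : p ≠ 0) (μ : R) :
    (derivative p + (X - C μ) * p).natDegree = p.natDegree + 1 := by
  have hmul : ((X - C μ) * p).natDegree = p.natDegree + 1 := by
    rw [natDegree_mul (X_sub_C_ne_zero μ) hp, natDegree_X_sub_C, add_comm]
  rw [natDegree_add_eq_right_of_natDegree_lt, hmul]
  exact hmul ▸ (natDegree_derivative_le p).trans_lt (by omega)

section GaussExpSum

variable {ι : Type*} (s : Finset ι) (c u : ι → ℝ) (p : ℝ[X]) (μ y : ℝ)

noncomputable def gaussExpSum : ℝ :=
  ∑ i ∈ s, c i * exp ((u i - μ) * y) + p.eval y * exp (y ^ 2 / 2 - μ * y)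

theorem gaussExpSum_mul_exp : gaussExpSum s c u p μ y * exp (μ * y) = gaussExpSum s c u p 0 y := by
  simp only [gaussExpSum, add_mul, Finset.sum_mul, mul_assoc, ← exp_add, sub_mul, sub_add_cancel,
    zero_mul, sub_zero]

theorem gaussExpSum_eq_zero_iff : gaussExpSum s c u p μ y = 0 ↔ gaussExpSum s c u p 0 y = 0 := by
  rw [← gaussExpSum_mul_exp, mul_eq_zero, or_iff_left (exp_ne_zero _)]

theorem gaussExpSum_insert {a : ι} [DecidableEq ι] (ha : a ∉ s) :
    gaussExpSum (insert a s) c u p μ y = c a * exp ((u a - μ) * y) + gaussExpSum s c u p μ y := by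
  rw [gaussExpSum, gaussExpSum, Finset.sum_insert ha, add_assoc]

theorem hasDerivAt_gaussExpSum :
    HasDerivAt (gaussExpSum s c u p μ)
      (gaussExpSum s (fun i => c i * (u i - μ)) u (derivative p + (X - C μ) * p) μ y) y := by
  have hsum : HasDerivAt (fun y => ∑ i ∈ s, c i * exp ((u i - μ) * y))
      (∑ i ∈ s, c i * (u i - μ) * exp ((u i - μ) * y)) y := by
    refine HasDerivAt.fun_sum fun i _ => ?_
    exact (((hasDerivAt_id' y).const_mul (u i - μ)).exp.const_mul (c i)).congr_deriv (by ring)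
  have hgauss : HasDerivAt (fun y => y ^ 2 / 2 - μ * y) (y - μ) y :=
    (((hasDerivAt_pow 2 y).div_const 2).fun_sub ((hasDerivAt_id' y).const_mul μ)).congr_deriv
      (by norm_num)
  refine (hsum.fun_add ((p.hasDerivAt y).mul hgauss.exp)).congr_deriv ?_
  simp only [gaussExpSum, eval_add, eval_mul, eval_sub, eval_X, eval_C]
  ring

theorem encard_setOf_gaussExpSum_eq_zero_le [DecidableEq ι] (hu : InjOn u s)
    (hc : ∀ i ∈ s, c i ≠ 0) (hp : p ≠ 0) :
    {y | gaussExpSum s c u p 0 y = 0}.encard ≤ 2 * s.card + p.natDegree := by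
  induction s using Finset.induction_on generalizing c p with
  | empty =>
    have hroots : {y | gaussExpSum ∅ c u p 0 y = 0} = p.roots.toFinset := by
      ext y
      simp [gaussExpSum, exp_ne_zero, mem_roots hp]
    rw [hroots, encard_coe_eq_coe_finsetCard]
    simpa using (Multiset.toFinset_card_le _).trans (card_roots' p)
  | insert a s ha ih =>
    set q := derivative p + (X - C (u a)) * p
    set c' := fun i => c i * (u i - u a)
    have hc' : ∀ i ∈ s, c' i ≠ 0 := fun i hi => mul_ne_zero (hc i (by simp [hi])) <|
      sub_ne_zero.2 fun h => ha (hu.eq_iff (by simp [hi]) (by simp) |>.1 h ▸ hi)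
    have hderiv (y : ℝ) : deriv (gaussExpSum (insert a s) c u p (u a)) y =
        gaussExpSum s c' u q (u a) y := by
      rw [(hasDerivAt_gaussExpSum _ _ _ _ _ y).deriv, gaussExpSum_insert _ _ _ _ _ _ ha]
      simp only [sub_self, mul_zero, zero_mul, zero_add, c', q]
    have hq_deg : q.natDegree = p.natDegree + 1 := natDegree_derivative_add_X_sub_C_mul hp (u a)
    have hq : q ≠ 0 := fun h => by simp [h] at hq_deg
    have hcont : Continuous (gaussExpSum (insert a s) c u p (u a)) :=
      continuous_iff_continuousAt.2 fun y => (hasDerivAt_gaussExpSum _ _ _ _ _ y).continuousAt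
    calc {y | gaussExpSum (insert a s) c u p 0 y = 0}.encard
        = {y | gaussExpSum (insert a s) c u p (u a) y = 0}.encard := by
          simp only [gaussExpSum_eq_zero_iff _ _ _ _ (u a)]
      _ ≤ {y | gaussExpSum s c' u q 0 y = 0}.encard + 1 := by
          simpa only [hderiv, gaussExpSum_eq_zero_iff _ _ _ _ (u a)]
            using encard_setOf_eq_zero_le_deriv_add_one hcont
      _ ≤ 2 * s.card + q.natDegree + 1 := by
          gcongr
          exact ih c' q (hu.mono (by simp)) hc' hq
      _ = 2 * (insert a s).card + p.natDegree := by
          rw [Finset.card_insert_of_notMem ha, hq_deg]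
          push_cast
          ring

end GaussExpSum

theorem stmt_4_general (n : ℕ) (u a : Fin n → ℝ) (hu : StrictMono u)
    (ha : ∀ i, 0 < a i) (a0 : ℝ) (ha0 : 0 < a0) :
    {y : ℝ | (∑ i, a i * Real.exp (-(y - u i) ^ 2 / 2)) - a0 = 0}.encard ≤
      (2 * n : ℕ∞) := by
  set c := fun i => a i * exp (-u i ^ 2 / 2)
  have hf (y : ℝ) : gaussExpSum Finset.univ c u (C (-a0)) 0 y =
      ((∑ i, a i * exp (-(y - u i) ^ 2 / 2)) - a0) * exp (y ^ 2 / 2) := by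
    simp only [gaussExpSum, eval_C, sub_mul, Finset.sum_mul, sub_zero, zero_mul, neg_mul,
      ← sub_eq_add_neg]
    congr 1
    refine Finset.sum_congr rfl fun i _ => ?_
    simp only [c, mul_assoc, ← exp_add]
    ring_nf
  have hzeros : {y : ℝ | (∑ i, a i * exp (-(y - u i) ^ 2 / 2)) - a0 = 0} =
      {y | gaussExpSum Finset.univ c u (C (-a0)) 0 y = 0} := by
    simp only [hf, mul_eq_zero, exp_ne_zero, or_false]
  rw [hzeros]
  simpa using encard_setOf_gaussExpSum_eq_zero_le Finset.univ c u (C (-a0))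
    hu.injective.injOn (fun i _ => mul_ne_zero (ha i).ne' (exp_ne_zero _))
    (C_ne_zero.2 (neg_ne_zero.2 ha0.ne'))

/-- a positive mixture of `n` equal-variance Gaussian kernels with distinct
centers, shifted down by a positive constant, has at most `2n` real zeros. -/
theorem stmt_4 (n : ℕ) (hn : 1 ≤ n) (u a : Fin n → ℝ) (hu : StrictMono u)
    (ha : ∀ i, 0 < a i) (a0 : ℝ) (ha0 : 0 < a0) :
    {y : ℝ | (∑ i, a i * Real.exp (-(y - u i) ^ 2 / 2)) - a0 = 0}.encard ≤
      (2 * n : ℕ∞) :=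
  stmt_4_general n u a hu ha a0 ha0
end

section
/- Let X be a real random variable with E[X] = 0 and |X| ≤ A almost surely, where 0 < A, and define F(z) = (1/√(2π)) E[(X − z) exp(−(z − X)²/2)] for z ∈ ℂ. Then |F(A)| ≥ (A/√(2π)) exp(−2A²); consequently, for every B ≥ A, the maximum of |F(z)| over the closed disc {|z| ≤ B} is at least (A/√(2π)) exp(−2A²). -/
open MeasureTheory Real

/-!
Write `Y = A − X`. Then `F(A) = −(1/√(2π)) E[Y exp(−Y²/2)]` and `0 ≤ Y ≤ 2A`, so
`exp(−Y²/2) ≥ exp(−2A²)` and `E[Y exp(−Y²/2)] ≥ E[Y] exp(−2A²) = A exp(−2A²)` because `E[X] = 0`.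
The point `A` lies in every disc `|z| ≤ B` with `B ≥ A`, on which `|F|` is bounded.
-/

lemma norm_sub_mul_cexp_neg_sq_half_le {x z : ℂ} {R : ℝ} (h : ‖x - z‖ ≤ R) :
    ‖(x - z) * Complex.exp (-(z - x) ^ 2 / 2)‖ ≤ R * exp (R ^ 2 / 2) := by
  have hexp : ‖Complex.exp (-(z - x) ^ 2 / 2)‖ ≤ exp (R ^ 2 / 2) := by
    rw [Complex.norm_exp]
    gcongr
    calc (-(z - x) ^ 2 / 2).re ≤ ‖-(z - x) ^ 2 / 2‖ := Complex.re_le_norm _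
      _ = ‖x - z‖ ^ 2 / 2 := by simp [norm_sub_rev]
      _ ≤ R ^ 2 / 2 := by gcongr
  rw [norm_mul]
  exact mul_le_mul h hexp (norm_nonneg _) ((norm_nonneg _).trans h)

section Integrals

variable {Ω : Type*} [MeasurableSpace Ω] {μ : Measure Ω}

/-- `√(2π) F(z)` in the notation of the statement. -/
noncomputable def gaussDerivIntegral (μ : Measure Ω) (X : Ω → ℝ) (z : ℂ) : ℂ :=
  ∫ ω, ((X ω : ℂ) - z) * Complex.exp (-(z - (X ω : ℂ)) ^ 2 / 2) ∂μ

lemma integral_mul_exp_neg_sq_half_ge [IsFiniteMeasure μ] {Y : Ω → ℝ} {c : ℝ}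
    (hY : AEStronglyMeasurable Y μ) (h0 : ∀ᵐ ω ∂μ, 0 ≤ Y ω) (hc : ∀ᵐ ω ∂μ, Y ω ≤ c) :
    (∫ ω, Y ω ∂μ) * exp (-c ^ 2 / 2) ≤ ∫ ω, Y ω * exp (-Y ω ^ 2 / 2) ∂μ := by
  have hYc : ∀ᵐ ω ∂μ, ‖Y ω‖ ≤ c := by
    filter_upwards [h0, hc] with ω h0 hc
    rwa [Real.norm_of_nonneg h0]
  have hYint : Integrable Y μ := .of_bound hY c hYc
  have hYexp : Integrable (fun ω => Y ω * exp (-Y ω ^ 2 / 2)) μ := by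
    refine .of_bound ((by fun_prop : Continuous fun t : ℝ => t * exp (-t ^ 2 / 2))
      |>.comp_aestronglyMeasurable hY) c ?_
    filter_upwards [h0, hYc] with ω h0 hYc
    rw [norm_mul, Real.norm_of_nonneg (exp_pos _).le]
    exact (mul_le_of_le_one_right (norm_nonneg _) (exp_le_one_iff.2 (by nlinarith))).trans hYc
  rw [← integral_mul_const]
  refine integral_mono_ae (hYint.mul_const _) hYexp ?_
  filter_upwards [h0, hc] with ω h0 hc
  gcongr

lemma gaussDerivIntegral_ofReal (X : Ω → ℝ) (a : ℝ) :
    gaussDerivIntegral μ X a = -((∫ ω, (a - X ω) * exp (-(a - X ω) ^ 2 / 2) ∂μ : ℝ) : ℂ) := by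
  rw [← integral_complex_ofReal, ← integral_neg, gaussDerivIntegral]
  congr 1 with ω
  push_cast
  ring

lemma norm_gaussDerivIntegral_le [IsFiniteMeasure μ] {X : Ω → ℝ} {A : ℝ}
    (hbd : ∀ᵐ ω ∂μ, |X ω| ≤ A) (z : ℂ) :
    ‖gaussDerivIntegral μ X z‖ ≤ (A + ‖z‖) * exp ((A + ‖z‖) ^ 2 / 2) * μ.real Set.univ := by
  refine norm_integral_le_of_norm_le_const ?_
  filter_upwards [hbd] with ω h
  refine norm_sub_mul_cexp_neg_sq_half_le ((norm_sub_le _ _).trans ?_)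
  simpa [Complex.norm_real] using h

lemma mul_exp_le_norm_gaussDerivIntegral [IsProbabilityMeasure μ] {X : Ω → ℝ}
    (hX : Measurable X) {A : ℝ} (hmean : ∫ ω, X ω ∂μ = 0) (hbd : ∀ᵐ ω ∂μ, |X ω| ≤ A) :
    A * exp (-(2 * A ^ 2)) ≤ ‖gaussDerivIntegral μ X A‖ := by
  have hXint : Integrable X μ := .of_bound hX.aestronglyMeasurable A (by simpa using hbd)
  have hmeanY : ∫ ω, (A - X ω) ∂μ = A := by
    simp [integral_sub (integrable_const A) hXint, hmean]
  have hY := integral_mul_exp_neg_sq_half_ge (μ := μ) (Y := fun ω => A - X ω) (c := 2 * A)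
    (measurable_const.sub hX).aestronglyMeasurable
    (hbd.mono fun ω h => by linarith [le_abs_self (X ω)])
    (hbd.mono fun ω h => by linarith [neg_abs_le (X ω), abs_nonneg (X ω)])
  rw [hmeanY, show -(2 * A) ^ 2 / 2 = -(2 * A ^ 2) by ring] at hY
  rw [gaussDerivIntegral_ofReal, norm_neg, Complex.norm_real, Real.norm_eq_abs]
  exact hY.trans (le_abs_self _)

end Integrals

/-- for a zero-mean `X` with `|X| ≤ A` a.s. (`A > 0`), the entire extension
`F(z) = (1/√(2π)) E[(X − z) exp(−(z−X)²/2)]` satisfies `|F(A)| ≥ (A/√(2π)) exp(−2A²)`;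
consequently, for every `B ≥ A`, the maximum of `|F|` over the closed disc `|z| ≤ B` is at
least `(A/√(2π)) exp(−2A²)`. -/
theorem stmt_6 {Ω : Type*} [MeasurableSpace Ω] (μ : Measure Ω) [IsProbabilityMeasure μ]
    (X : Ω → ℝ) (hXmeas : Measurable X) (A : ℝ) (hA : 0 < A)
    (hmean : ∫ ω, X ω ∂μ = 0)
    (hbd : ∀ᵐ ω ∂μ, |X ω| ≤ A)
    (F : ℂ → ℂ)
    (hF : ∀ z : ℂ, F z = (1 / (Real.sqrt (2 * π)) : ℝ) *
      ∫ ω, ((X ω : ℂ) - z) * Complex.exp (-(z - (X ω : ℂ)) ^ 2 / 2) ∂μ) :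
    (A / Real.sqrt (2 * π)) * Real.exp (-(2 * A ^ 2)) ≤ ‖F (A : ℂ)‖ ∧
    ∀ B : ℝ, A ≤ B →
      (A / Real.sqrt (2 * π)) * Real.exp (-(2 * A ^ 2)) ≤
        sSup ((fun z => ‖F z‖) '' Metric.closedBall (0 : ℂ) B) := by
  have hnorm (z : ℂ) : ‖F z‖ = 1 / √(2 * π) * ‖gaussDerivIntegral μ X z‖ := by
    rw [hF, norm_mul, Complex.norm_real, Real.norm_of_nonneg (by positivity), gaussDerivIntegral]
  have hFA : A / √(2 * π) * exp (-(2 * A ^ 2)) ≤ ‖F A‖ := by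
    rw [hnorm, div_eq_mul_one_div, mul_comm A, mul_assoc]
    gcongr
    exact mul_exp_le_norm_gaussDerivIntegral hXmeas hmean hbd
  refine ⟨hFA, fun B hB => hFA.trans (le_csSup ?_ ⟨A, by simpa [abs_of_pos hA] using hB, rfl⟩)⟩
  refine ⟨1 / √(2 * π) * ((A + B) * exp ((A + B) ^ 2 / 2)), ?_⟩
  rintro _ ⟨z, hz, rfl⟩
  rw [mem_closedBall_zero_iff] at hz
  have hAB : 0 ≤ A + B := by linarith
  calc ‖F z‖ ≤ 1 / √(2 * π) * ((A + ‖z‖) * exp ((A + ‖z‖) ^ 2 / 2)) := by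
        rw [hnorm]
        gcongr
        simpa using norm_gaussDerivIntegral_le hbd z
    _ ≤ 1 / √(2 * π) * ((A + B) * exp ((A + B) ^ 2 / 2)) := by gcongr
end

section
/- Let X be a real random variable with E[X] = 0 and |X| ≤ A almost surely, where 0 < A < R, and let f_Y′(y) = (1/√(2π)) E[(X − y) exp(−(y − X)²/2)] be the derivative of the output density of the channel Y = X + Z with Z standard Gaussian independent of X. Then for every s > 1, the number of zeros of f_Y′ in the interval [−R, R] is at most ( ((A+R)s + A)²/2 + 2A² + log(2 + (A+R)s/A) ) / log s. -/
/-!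
The function `F z = E[(X - z) exp (-(z - X)² / 2)]` is entire and equals `√(2π) f_Y′` on `ℝ`,
so the zeros of `f_Y′` in `[-R, R]` are zeros of `F` in the disc of radius `A + R` about `-A`.
At the centre, `F (-A) = E[(X + A) exp (-(X + A)² / 2)] ≥ A exp (-2A²)`, since `X + A ∈ [0, 2A]`
has mean `A`; on the circle of radius `ρ = (A + R) s` about `-A`, `|F| ≤ (2A + ρ) exp (ρ² / 2)`.
Jensen's inequality bounds the number of zeros in the smaller disc by
`log (max |F| / |F (-A)|) / log s`.
-/

open MeasureTheory Real Metric Set Finset MeromorphicOn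

theorem Set.finite_and_ncard_le_of_forall_finset_card_le {α : Type*} {S : Set α} {B : ℝ}
    (h : ∀ T : Finset α, ↑T ⊆ S → (#T : ℝ) ≤ B) : S.Finite ∧ (S.ncard : ℝ) ≤ B := by
  have hS : S.Finite := by
    by_contra hS
    obtain ⟨T, hTS, hT⟩ := Set.Infinite.exists_subset_card_eq hS (⌊B⌋₊ + 1)
    have := h T hTS
    rw [hT, Nat.cast_add_one] at this
    exact (Nat.lt_floor_add_one B).not_ge this
  refine ⟨hS, ?_⟩
  rw [Set.ncard_eq_toFinset_card S hS]
  exact h _ (by simp)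

theorem AnalyticOnNhd.one_le_divisor {𝕜 E : Type*} [NontriviallyNormedField 𝕜]
    [NormedAddCommGroup E] [NormedSpace 𝕜 E] {f : 𝕜 → E} {U : Set 𝕜} {c u : 𝕜}
    (hf : AnalyticOnNhd 𝕜 f U) (hU : IsPreconnected U) (hc : c ∈ U) (hfc : f c ≠ 0)
    (hu : u ∈ U) (hfu : f u = 0) : 1 ≤ divisor f U u := by
  have hne_zero : analyticOrderAt f u ≠ 0 := (hf u hu).analyticOrderAt_ne_zero.mpr hfu
  have hne_top : analyticOrderAt f u ≠ ⊤ :=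
    hf.analyticOrderAt_ne_top_of_isPreconnected hU hc hu
      (by simp [(hf c hc).analyticOrderAt_eq_zero.mpr hfc])
  obtain ⟨n, hn⟩ := ENat.ne_top_iff_exists.mp hne_top
  rw [← hn] at hne_zero
  rw [hf.divisor_apply hu, ← hn]
  simp only [ENat.map_natCast, WithTop.untop₀_coe, Nat.one_le_cast]
  exact Nat.one_le_iff_ne_zero.mpr (by exact_mod_cast hne_zero)

theorem AnalyticOnNhd.finite_zeros_and_ncard_le {f : ℂ → ℂ} {c : ℂ} {r ρ M : ℝ}
    (hr : 0 < r) (hrρ : r < ρ) (hM : 0 < M) (hf : AnalyticOnNhd ℂ f (closedBall c ρ))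
    (hfc : f c ≠ 0) (hfM : ∀ z ∈ sphere c ρ, ‖f z‖ ≤ M) :
    (closedBall c r ∩ f ⁻¹' {0}).Finite ∧
      ((closedBall c r ∩ f ⁻¹' {0}).ncard : ℝ) ≤ Real.log (M / ‖f c‖) / Real.log (ρ / r) := by
  -- Mathlib's Jensen inequality `sum_divisor_le` wants a bound `≥ 1`, hence the rescaling.
  set g : ℂ → ℂ := fun z => M⁻¹ * f z
  have hg : AnalyticOnNhd ℂ g (closedBall c ρ) := fun z hz => analyticAt_const.mul (hf z hz)
  have hgc : g c ≠ 0 := mul_ne_zero (by simpa using hM.ne') hfc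
  have hgM : ∀ z ∈ sphere c ρ, ‖g z‖ ≤ 1 := fun z hz => by
    simpa [g, abs_of_pos hM, inv_mul_le_one₀ hM] using hfM z hz
  have hr' : |r| = r := abs_of_pos hr
  have hρ : |ρ| = ρ := abs_of_pos (hr.trans hrρ)
  have jensen := AnalyticOnNhd.sum_divisor_le (c := c) (r := r) (R := ρ) (M := 1)
    (by rwa [hr']) (by rwa [hr', hρ]) le_rfl (by rwa [hρ]) hgc (by rwa [hρ])
  rw [hr', show 1 / ‖g c‖ = M / ‖f c‖ by simp [g, abs_of_pos hM, div_eq_inv_mul]] at jensen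
  have hgr : AnalyticOnNhd ℂ g (closedBall c r) := hg.mono (closedBall_subset_closedBall hrρ.le)
  set D := divisor g (closedBall c r)
  have hsupp : D.support.Finite := D.finiteSupport (isCompact_closedBall c r)
  refine Set.finite_and_ncard_le_of_forall_finset_card_le fun T hT => ?_
  have hcard : (#T : ℤ) ≤ ∑ᶠ u, D u :=
    calc (#T : ℤ) = ∑ u ∈ T, 1 := by simp
      _ ≤ ∑ u ∈ T, D u := Finset.sum_le_sum fun u hu =>
        hgr.one_le_divisor (convex_closedBall c r).isPreconnected (mem_closedBall_self hr.le)
          hgc (hT hu).1 (by simp [g, show f u = 0 from (hT hu).2])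
      _ ≤ ∑ u ∈ T ∪ hsupp.toFinset, D u :=
        Finset.sum_le_sum_of_subset_of_nonneg subset_union_left
          fun u _ _ => hgr.divisor_nonneg u
      _ = ∑ᶠ u, D u := (finsum_eq_sum_of_support_subset _ (by simp)).symm
  exact (Int.cast_le.mpr hcard).trans (by exact_mod_cast jensen)

section CompactRange

variable {Ω α : Type*} [MeasurableSpace Ω] {μ : Measure Ω} [IsFiniteMeasure μ]
  [TopologicalSpace α] [MeasurableSpace α] [OpensMeasurableSpace α]
  {X : Ω → α} {K : Set α}

theorem integrable_comp_of_ae_mem_compact {E : Type*} [NormedAddCommGroup E]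
    [SecondCountableTopologyEither α E] {h : α → E} (hh : Continuous h) (hX : Measurable X)
    (hK : IsCompact K) (hXK : ∀ᵐ ω ∂μ, X ω ∈ K) : Integrable (fun ω => h (X ω)) μ := by
  obtain ⟨C, hC⟩ := hK.exists_bound_of_continuousOn hh.continuousOn
  exact (integrable_const C).mono' (hh.aestronglyMeasurable.comp_measurable hX)
    (hXK.mono fun ω hω => hC _ hω)

theorem differentiable_integral_of_ae_mem_compact (hX : Measurable X) (hK : IsCompact K)
    (hXK : ∀ᵐ ω ∂μ, X ω ∈ K) {k k' : α → ℂ → ℂ} (hk : Continuous (Function.uncurry k))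
    (hk' : Continuous (Function.uncurry k')) (hderiv : ∀ x z, HasDerivAt (k x) (k' x z) z) :
    Differentiable ℂ fun z => ∫ ω, k (X ω) z ∂μ := by
  intro z₀
  have hint : ∀ {h : α → ℂ → ℂ}, Continuous (Function.uncurry h) → ∀ z,
      Integrable (fun ω => h (X ω) z) μ := fun hh z =>
    integrable_comp_of_ae_mem_compact (hh.comp (continuous_id.prodMk continuous_const)) hX hK hXK
  obtain ⟨C, hC⟩ := (hK.prod (isCompact_closedBall z₀ 1)).exists_bound_of_continuousOn
    hk'.continuousOn
  have hbound : ∀ᵐ ω ∂μ, ∀ z ∈ ball z₀ 1, ‖k' (X ω) z‖ ≤ C :=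
    hXK.mono fun ω hω z hz => hC (X ω, z) ⟨hω, ball_subset_closedBall hz⟩
  exact (hasDerivAt_integral_of_dominated_loc_of_deriv_le (ball_mem_nhds z₀ one_pos)
    (Filter.Eventually.of_forall fun z => (hint hk z).aestronglyMeasurable) (hint hk z₀)
    (hint hk' z₀).aestronglyMeasurable hbound (integrable_const C)
    (Filter.Eventually.of_forall fun ω z _ => hderiv (X ω) z)).2.differentiableAt

end CompactRange

section GaussianChannel

variable {Ω : Type*} [MeasurableSpace Ω]

/-- `√(2π) f_Y′`, extended to an entire function of the output variable. -/
noncomputable def complexDensityDeriv (μ : Measure Ω) (X : Ω → ℝ) (z : ℂ) : ℂ :=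
  ∫ ω, ((X ω : ℂ) - z) * Complex.exp (-(z - X ω) ^ 2 / 2) ∂μ

theorem norm_cexp_neg_sub_sq_div_two_le (x : ℝ) (z : ℂ) :
    ‖Complex.exp (-(z - x) ^ 2 / 2)‖ ≤ rexp (z.im ^ 2 / 2) := by
  rw [Complex.norm_exp, exp_le_exp]
  have hre : (-(z - x) ^ 2 / 2).re = (z.im ^ 2 - (z.re - x) ^ 2) / 2 := by
    simp [sq, Complex.mul_re]
  rw [hre]
  nlinarith [sq_nonneg (z.re - x)]

theorem complexDensityDeriv_ofReal (μ : Measure Ω) (X : Ω → ℝ) (y : ℝ) :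
    complexDensityDeriv μ X y = ↑(∫ ω, (X ω - y) * rexp (-(y - X ω) ^ 2 / 2) ∂μ) := by
  rw [complexDensityDeriv, ← integral_complex_ofReal]
  push_cast
  rfl

variable {μ : Measure Ω} {X : Ω → ℝ} {A : ℝ}

theorem differentiable_complexDensityDeriv [IsFiniteMeasure μ] (hX : Measurable X)
    (hbd : ∀ᵐ ω ∂μ, |X ω| ≤ A) : Differentiable ℂ (complexDensityDeriv μ X) := by
  refine differentiable_integral_of_ae_mem_compact hX isCompact_Icc
    (hbd.mono fun ω hω => abs_le.mp hω)
    (k := fun (x : ℝ) z => (x - z) * Complex.exp (-(z - x) ^ 2 / 2))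
    (k' := fun (x : ℝ) z => ((x - z) ^ 2 - 1) * Complex.exp (-(z - x) ^ 2 / 2))
    (by fun_prop) (by fun_prop) fun x z => ?_
  have hexponent : HasDerivAt (fun w : ℂ => -(w - x) ^ 2 / 2) (-(z - x)) z :=
    ((((hasDerivAt_id' z).sub_const (x : ℂ)).fun_pow 2).fun_neg.div_const 2).congr_deriv
      (by ring)
  exact (((hasDerivAt_id' z).const_sub (x : ℂ)).fun_mul hexponent.cexp).congr_deriv (by ring)

variable [IsProbabilityMeasure μ]

theorem norm_complexDensityDeriv_le (hbd : ∀ᵐ ω ∂μ, |X ω| ≤ A) (z : ℂ) :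
    ‖complexDensityDeriv μ X z‖ ≤ (A + ‖z‖) * rexp (z.im ^ 2 / 2) := by
  refine (norm_integral_le_of_norm_le (integrable_const ((A + ‖z‖) * rexp (z.im ^ 2 / 2)))
    (hbd.mono fun ω hω => ?_)).trans (by simp)
  rw [norm_mul]
  refine mul_le_mul ((norm_sub_le _ _).trans ?_) (norm_cexp_neg_sub_sq_div_two_le _ _)
    (norm_nonneg _) (by linarith [abs_nonneg (X ω), norm_nonneg z])
  simpa using hω

theorem mul_exp_le_norm_complexDensityDeriv_neg (hX : Measurable X)
    (hmean : ∫ ω, X ω ∂μ = 0) (hbd : ∀ᵐ ω ∂μ, |X ω| ≤ A) :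
    A * rexp (-(2 * A ^ 2)) ≤ ‖complexDensityDeriv μ X (-A)‖ := by
  have hXK : ∀ᵐ ω ∂μ, X ω ∈ Icc (-A) A := hbd.mono fun ω hω => abs_le.mp hω
  rw [← Complex.ofReal_neg, complexDensityDeriv_ofReal, Complex.norm_real, Real.norm_eq_abs]
  refine le_trans ?_ (le_abs_self _)
  have hpointwise : ∀ᵐ ω ∂μ, rexp (-(2 * A ^ 2)) * (X ω + A) ≤
      (X ω - -A) * rexp (-(-A - X ω) ^ 2 / 2) := by
    filter_upwards [hXK] with ω ⟨hlo, hhi⟩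
    rw [mul_comm, sub_neg_eq_add]
    exact mul_le_mul_of_nonneg_left (exp_le_exp.mpr (by nlinarith)) (by linarith)
  have hint : ∀ {h : ℝ → ℝ}, Continuous h → Integrable (fun ω => h (X ω)) μ :=
    fun hh => integrable_comp_of_ae_mem_compact hh hX isCompact_Icc hXK
  calc A * rexp (-(2 * A ^ 2)) = ∫ ω, rexp (-(2 * A ^ 2)) * (X ω + A) ∂μ := by
        rw [integral_const_mul, integral_add (hint (h := fun x => x) continuous_id)
          (integrable_const A), hmean]
        simp [mul_comm]
    _ ≤ _ := integral_mono_ae (hint (h := fun x => rexp (-(2 * A ^ 2)) * (x + A)) (by fun_prop))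
        (hint (h := fun x => (x - -A) * rexp (-(-A - x) ^ 2 / 2)) (by fun_prop)) hpointwise

theorem finite_zeros_and_ncard_le_complexDensityDeriv (hX : Measurable X) (hA : 0 < A)
    (hmean : ∫ ω, X ω ∂μ = 0) (hbd : ∀ᵐ ω ∂μ, |X ω| ≤ A) {r s : ℝ} (hr : 0 < r) (hs : 1 < s) :
    (closedBall (-A : ℂ) r ∩ complexDensityDeriv μ X ⁻¹' {0}).Finite ∧
      ((closedBall (-A : ℂ) r ∩ complexDensityDeriv μ X ⁻¹' {0}).ncard : ℝ) ≤
        ((r * s) ^ 2 / 2 + 2 * A ^ 2 + log (2 + r * s / A)) / log s := by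
  set F := complexDensityDeriv μ X
  set ρ := r * s with hρ
  set m := A * rexp (-(2 * A ^ 2))
  set M := (2 * A + ρ) * rexp (ρ ^ 2 / 2)
  have hrρ : r < ρ := lt_mul_of_one_lt_right hr hs
  have hlow : m ≤ ‖F (-A)‖ := mul_exp_le_norm_complexDensityDeriv_neg hX hmean hbd
  have hm : 0 < m := by positivity
  have hsphere : ∀ z ∈ sphere (-A : ℂ) ρ, ‖F z‖ ≤ M := by
    intro z hz
    rw [mem_sphere, dist_eq_norm, sub_neg_eq_add] at hz
    have hnorm : ‖z‖ ≤ A + ρ :=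
      calc ‖z‖ = ‖(z + A) - A‖ := by ring_nf
        _ ≤ ‖z + A‖ + ‖(A : ℂ)‖ := norm_sub_le _ _
        _ = A + ρ := by rw [hz, Complex.norm_real, norm_of_nonneg hA.le, add_comm]
    have him : |z.im| ≤ ρ := by simpa [hz] using Complex.abs_im_le_norm (z + A)
    refine (norm_complexDensityDeriv_le hbd z).trans (mul_le_mul (by linarith)
      (exp_le_exp.mpr ?_) (by positivity) (by positivity))
    nlinarith [abs_nonneg z.im, sq_abs z.im]
  obtain ⟨hfin, hcard⟩ := AnalyticOnNhd.finite_zeros_and_ncard_le hr hrρ (by positivity)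
    (fun z _ => (differentiable_complexDensityDeriv hX hbd).analyticAt z)
    (norm_pos_iff.mp (hm.trans_le hlow)) hsphere
  refine ⟨hfin, hcard.trans ?_⟩
  rw [show ρ / r = s from mul_div_cancel_left₀ s hr.ne']
  refine div_le_div_of_nonneg_right ?_ (log_pos hs).le
  calc log (M / ‖F (-A)‖) ≤ log (M / m) :=
        log_le_log (div_pos (by positivity) (hm.trans_le hlow))
          (div_le_div_of_nonneg_left (by positivity) hm hlow)
    _ = log ((2 + ρ / A) * rexp (ρ ^ 2 / 2 + 2 * A ^ 2)) := by
        congr 1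
        rw [exp_add]
        simp only [m, M, exp_neg]
        field_simp
    _ = _ := by rw [log_mul (by positivity) (exp_pos _).ne', log_exp]; ring

end GaussianChannel

/-- for zero-mean `X` with `|X| ≤ A` a.s. and `0 < A < R`, the derivative
`f_Y′(y) = (1/√(2π)) E[(X − y) exp(−(y−X)²/2)]` of the output density has finitely many
zeros in `[−R, R]`, and for every `s > 1` their number is at most
`( ((A+R)s + A)²/2 + 2A² + log(2 + (A+R)s/A) ) / log s`. -/
theorem stmt_7 {Ω : Type*} [MeasurableSpace Ω] (μ : Measure Ω) [IsProbabilityMeasure μ]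
    (X : Ω → ℝ) (hXmeas : Measurable X) (A R : ℝ) (hA : 0 < A) (hAR : A < R)
    (hmean : ∫ ω, X ω ∂μ = 0)
    (hbd : ∀ᵐ ω ∂μ, |X ω| ≤ A)
    (fY' : ℝ → ℝ)
    (hfY' : ∀ y : ℝ, fY' y = (1 / Real.sqrt (2 * π)) *
      ∫ ω, (X ω - y) * Real.exp (-(y - X ω) ^ 2 / 2) ∂μ) :
    {y ∈ Set.Icc (-R) R | fY' y = 0}.Finite ∧
    ∀ s : ℝ, 1 < s →
      ({y ∈ Set.Icc (-R) R | fY' y = 0}.ncard : ℝ) ≤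
        (((A + R) * s + A) ^ 2 / 2 + 2 * A ^ 2 +
          Real.log (2 + (A + R) * s / A)) / Real.log s := by
  set S := {y ∈ Set.Icc (-R) R | fY' y = 0}
  set Z := closedBall (-A : ℂ) (A + R) ∩ complexDensityDeriv μ X ⁻¹' {0}
  have hSZ : Complex.ofReal '' S ⊆ Z := by
    rintro _ ⟨y, ⟨⟨hyl, hyr⟩, hy⟩, rfl⟩
    refine ⟨?_, ?_⟩
    · rw [mem_closedBall, dist_eq_norm, sub_neg_eq_add, ← Complex.ofReal_add, Complex.norm_real,
        norm_eq_abs, abs_le]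
      constructor <;> linarith
    · rw [hfY', mul_eq_zero] at hy
      simp [complexDensityDeriv_ofReal, hy.resolve_left (by positivity)]
  have hcount := fun s (hs : 1 < s) =>
    finite_zeros_and_ncard_le_complexDensityDeriv hXmeas hA hmean hbd (r := A + R)
      (by linarith) hs
  refine ⟨((hcount 2 one_lt_two).1.subset hSZ).of_finite_image
    Complex.ofReal_injective.injOn, fun s hs => ?_⟩
  obtain ⟨hfin, hcard⟩ := hcount s hs
  calc (S.ncard : ℝ) = (Complex.ofReal '' S).ncard := by
        rw [ncard_image_of_injective _ Complex.ofReal_injective]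
    _ ≤ Z.ncard := by exact_mod_cast ncard_le_ncard hSZ hfin
    _ ≤ _ := hcard
    _ ≤ _ := by
        have hρ : 0 < (A + R) * s := mul_pos (by linarith) (by linarith)
        exact div_le_div_of_nonneg_right (by nlinarith) (log_pos hs).le
end

section
/- Let X be a real random variable with E[X] = 0 and |X| ≤ A almost surely (A > 0), and let f_Y(y) = (1/√(2π)) E[exp(−(y−X)²/2)]. Fix κ ∈ (0, 1/√(2π)) and let R > A + (log(1/(2πκ²)))^{1/2}. Then all real solutions of f_Y(y) = κ lie in [−R, R], and for every s > 1 the number of real zeros of f_Y − κ is at most 1 + ( ((A+R)s + A)²/2 + 2A² + log(2 + (A+R)s/A) ) / log s. -/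
/-!
Put `g(y) = √(2π) f_Y(y) = E exp(-(y - X)²/2)`. If `|y| > R` then `|y - X| ≥ |y| - A > B`,
`B = √(log(1/(2πκ²)))`, so `g(y) < e^{-B²/2} = √(2π) κ`: every solution lies in `[-R, R]`.

By Rolle, `g'` vanishes strictly between any two solutions, which yields at least
`#solutions - 1` distinct real zeros of `g'` in `[-R, R]`. The derivative extends to the entire
function `G(z) = E[(X - z) exp(-(z - X)²/2)]`. On the circle `|z - A| = ρ = s(A + R)` we
have `|G| ≤ (2A + ρ) e^{ρ²/2}`, while `E X = 0` and `0 ≤ A - X ≤ 2A` give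
`|G(A)| ≥ A e^{-2A²}`. Replacing each of the `n` zeros `t` (all within `A + R` of `A`) by the
factor `ρ² - conj(t - A)(z - A)`, which has modulus `ρ |z - t|` on the circle, and applying the
maximum modulus principle gives `sⁿ |G(A)| ≤ max_{|z - A| = ρ} |G|`. Taking logarithms yields
the bound for every finite set of solutions, hence also finiteness.
-/

open MeasureTheory Real Metric Set Filter ComplexConjugate
open scoped Complex

theorem exists_differentiable_eq_mul_prod_sub {f : ℂ → ℂ} (hf : Differentiable ℂ f)
    (T : Finset ℂ) (hT : ∀ t ∈ T, f t = 0) :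
    ∃ h : ℂ → ℂ, Differentiable ℂ h ∧ ∀ z, f z = h z * ∏ t ∈ T, (z - t) := by
  classical
  induction T using Finset.induction_on generalizing f with
  | empty => exact ⟨f, hf, fun z => by simp⟩
  | @insert a T ha ih =>
    have hfa : f a = 0 := hT a (Finset.mem_insert_self a T)
    have hg : Differentiable ℂ (dslope f a) :=
      differentiableOn_univ.1 ((Complex.differentiableOn_dslope univ_mem).2 hf.differentiableOn)
    have hfg : ∀ z, f z = (z - a) * dslope f a z := fun z => by
      simpa [hfa] using (sub_smul_dslope f a z).symm
    have hgT : ∀ t ∈ T, dslope f a t = 0 := fun t ht => by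
      have hta : t - a ≠ 0 := sub_ne_zero.2 (ne_of_mem_of_not_mem ht ha)
      simpa [hta, hT t (Finset.mem_insert_of_mem ht)] using (hfg t).symm
    obtain ⟨h, hh, hgh⟩ := ih hg hgT
    exact ⟨h, hh, fun z => by rw [Finset.prod_insert ha, hfg z, hgh z]; ring⟩

theorem norm_sq_sub_conj_mul_eq {c z t : ℂ} {ρ : ℝ} (hz : ‖z - c‖ = ρ) :
    ‖(ρ : ℂ) ^ 2 - conj (t - c) * (z - c)‖ = ρ * ‖z - t‖ := by
  have hρ : (ρ : ℂ) ^ 2 = (z - c) * conj (z - c) := by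
    rw [Complex.mul_conj, Complex.normSq_eq_norm_sq, hz]; push_cast; ring
  have : (ρ : ℂ) ^ 2 - conj (t - c) * (z - c) = (z - c) * conj (z - t) := by
    rw [hρ, map_sub, map_sub, map_sub]; ring
  rw [this, norm_mul, RCLike.norm_conj, hz]

theorem pow_card_mul_norm_le {f : ℂ → ℂ} (hf : Differentiable ℂ f) {c : ℂ} {r s M : ℝ}
    (hr : 0 < r) (hs : 0 < s) {T : Finset ℂ} (hTf : ∀ t ∈ T, f t = 0)
    (hTr : ∀ t ∈ T, ‖t - c‖ ≤ r) (hM : ∀ z ∈ sphere c (s * r), ‖f z‖ ≤ M) :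
    s ^ T.card * ‖f c‖ ≤ M := by
  obtain ⟨h, hh, hfh⟩ := exists_differentiable_eq_mul_prod_sub hf T hTf
  set ρ := s * r
  have hρ : 0 < ρ := mul_pos hs hr
  set n := T.card
  set B : ℂ → ℂ := fun z => h z * ∏ t ∈ T, ((ρ : ℂ) ^ 2 - conj (t - c) * (z - c))
  have hB : Differentiable ℂ B := by fun_prop
  have hB_sphere : ∀ z ∈ sphere c ρ, ‖B z‖ ≤ ρ ^ n * M := fun z hz => by
    rw [mem_sphere_iff_norm] at hz
    calc ‖B z‖ = ρ ^ n * ‖f z‖ := by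
          simp only [B, hfh z, norm_mul, norm_prod, norm_sq_sub_conj_mul_eq hz,
            Finset.prod_mul_distrib, Finset.prod_const]
          ring
      _ ≤ ρ ^ n * M := by gcongr; exact hM z (mem_sphere_iff_norm.2 hz)
  have hB_center : ‖B c‖ = ρ ^ n * (ρ ^ n * ‖h c‖) := by
    simp only [B, sub_self, mul_zero, sub_zero, Finset.prod_const, norm_mul, norm_pow,
      Complex.norm_real, norm_of_nonneg hρ.le]
    ring
  have hh_center : ρ ^ n * ‖h c‖ ≤ M := by
    have := Complex.norm_le_of_forall_mem_frontier_norm_le isBounded_ball hB.diffContOnCl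
      (by rwa [frontier_ball c hρ.ne']) (subset_closure (mem_ball_self hρ))
    rw [hB_center] at this
    exact le_of_mul_le_mul_of_pos_left this (pow_pos hρ n)
  have hf_center : ‖f c‖ ≤ ‖h c‖ * r ^ n := by
    rw [hfh c, norm_mul, norm_prod]
    gcongr
    calc ∏ t ∈ T, ‖c - t‖ ≤ ∏ _t ∈ T, r :=
          Finset.prod_le_prod (fun _ _ => norm_nonneg _) fun t ht => norm_sub_rev c t ▸ hTr t ht
      _ = r ^ n := Finset.prod_const r
  calc s ^ n * ‖f c‖ ≤ s ^ n * (‖h c‖ * r ^ n) := by gcongr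
    _ = ρ ^ n * ‖h c‖ := by rw [mul_pow]; ring
    _ ≤ M := hh_center

theorem exists_finset_hasDerivAt_eq_zero {f f' : ℝ → ℝ} (hf : ∀ x, HasDerivAt f (f' x) x)
    {S : Finset ℝ} {K : ℝ} (hS : ∀ y ∈ S, f y = K) :
    ∃ T : Finset ℝ, S.card ≤ T.card + 1 ∧
      ∀ ξ ∈ T, f' ξ = 0 ∧ ∃ a ∈ S, ∃ b ∈ S, a < ξ ∧ ξ < b := by
  classical
  have hRolle : ∀ p ∈ S ×ˢ S, p.1 < p.2 → ∃ ξ, p.1 < ξ ∧ ξ < p.2 ∧ f' ξ = 0 := by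
    rintro ⟨a, b⟩ hab hlt
    rw [Finset.mem_product] at hab
    obtain ⟨ξ, hξ, hξ0⟩ := exists_hasDerivAt_eq_zero hlt
      (fun x _ => (hf x).continuousAt.continuousWithinAt)
      ((hS a hab.1).trans (hS b hab.2).symm) fun x _ => hf x
    exact ⟨ξ, hξ.1, hξ.2, hξ0⟩
  choose! ξ hξ using hRolle
  have hmem : ∀ a ∈ S, ∀ b ∈ S, a < b → (a, b) ∈ (S ×ˢ S).filter fun p => p.1 < p.2 :=
    fun a ha b hb hab => Finset.mem_filter.2 ⟨Finset.mem_product.2 ⟨ha, hb⟩, hab⟩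
  refine ⟨((S ×ˢ S).filter fun p => p.1 < p.2).image ξ, ?_, ?_⟩
  · refine Finset.card_le_of_interleaved fun a ha b hb hab _ => ?_
    obtain ⟨h₁, h₂, -⟩ := hξ (a, b) (Finset.mem_product.2 ⟨ha, hb⟩) hab
    exact ⟨ξ (a, b), Finset.mem_image_of_mem ξ (hmem a ha b hb hab), h₁, h₂⟩
  · simp only [Finset.mem_image, Finset.mem_filter, Finset.mem_product]
    rintro _ ⟨⟨a, b⟩, ⟨⟨ha, hb⟩, hab⟩, rfl⟩
    obtain ⟨h₁, h₂, h₀⟩ := hξ (a, b) (Finset.mem_product.2 ⟨ha, hb⟩) hab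
    exact ⟨h₀, a, ha, b, hb, h₁, h₂⟩

theorem norm_cexp_neg_sq_div_two_le (w : ℂ) :
    ‖cexp (-w ^ 2 / 2)‖ ≤ rexp (w.im ^ 2 / 2) := by
  rw [Complex.norm_exp]
  gcongr
  have : (-w ^ 2 / 2).re = (w.im ^ 2 - w.re ^ 2) / 2 := by
    simp [sq, Complex.mul_re]
  rw [this]
  nlinarith [sq_nonneg w.re]

theorem norm_sub_mul_cexp_le {A x c r : ℝ} {z : ℂ} (hx : |x| ≤ A) (hz : ‖z - c‖ ≤ r) :
    ‖((x : ℂ) - z) * cexp (-(z - x) ^ 2 / 2)‖ ≤ (A + |c| + r) * rexp (r ^ 2 / 2) := by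
  have hr : 0 ≤ r := (norm_nonneg _).trans hz
  have h_lin : ‖(x : ℂ) - z‖ ≤ A + |c| + r := by
    calc ‖(x : ℂ) - z‖ = ‖((x - c : ℝ) : ℂ) - (z - c)‖ := by push_cast; ring_nf
      _ ≤ |x - c| + ‖z - c‖ :=
          (norm_sub_le _ _).trans_eq (by rw [Complex.norm_real, norm_eq_abs])
      _ ≤ A + |c| + r := by linarith [abs_sub x c]
  have h_exp : ‖cexp (-(z - x) ^ 2 / 2)‖ ≤ rexp (r ^ 2 / 2) := by
    refine (norm_cexp_neg_sq_div_two_le _).trans ?_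
    have him : |(z - c).im| ≤ r := (Complex.abs_im_le_norm _).trans hz
    simp only [Complex.sub_im, Complex.ofReal_im, sub_zero] at him ⊢
    have := sq_le_sq' (abs_le.1 him).1 (abs_le.1 him).2
    rw [Real.exp_le_exp]
    linarith
  rw [norm_mul]
  exact mul_le_mul h_lin h_exp (norm_nonneg _) (by linarith [abs_nonneg x, abs_nonneg c])

theorem card_le_of_pow_mul_le {A R s : ℝ} {n : ℕ} (hA : 0 < A) (hR : 0 ≤ R) (hs : 1 < s)
    (h : s ^ n * (A * rexp (-(2 * A ^ 2))) ≤
      (2 * A + s * (A + R)) * rexp ((s * (A + R)) ^ 2 / 2)) :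
    (n : ℝ) ≤ (((A + R) * s + A) ^ 2 / 2 + 2 * A ^ 2 + log (2 + (A + R) * s / A)) / log s := by
  have hs₀ : 0 < s := one_pos.trans hs
  have hL : 0 < 2 * A + s * (A + R) := by positivity
  have hlog := log_le_log (by positivity) h
  rw [log_mul (by positivity) (by positivity), log_mul hA.ne' (exp_pos _).ne', log_pow,
    log_exp, log_mul hL.ne' (exp_pos _).ne', log_exp] at hlog
  have hratio : log (2 + (A + R) * s / A) = log (2 * A + s * (A + R)) - log A := by
    rw [← log_div hL.ne' hA.ne']; congr 1; field_simp
  have hsq : (s * (A + R)) ^ 2 ≤ ((A + R) * s + A) ^ 2 := by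
    have : 0 ≤ s * (A + R) := by positivity
    nlinarith
  rw [le_div_iff₀ (log_pos hs)]
  linarith

section GaussConv

variable {Ω : Type*} [MeasurableSpace Ω] {μ : Measure Ω} {X : Ω → ℝ} {A : ℝ}

/-- At real `y`, this is `√(2π) f_Y(y)`. -/
noncomputable def gaussConv (μ : Measure Ω) (X : Ω → ℝ) (z : ℂ) : ℂ :=
  ∫ ω, cexp (-(z - X ω) ^ 2 / 2) ∂μ

noncomputable def gaussConvDeriv (μ : Measure Ω) (X : Ω → ℝ) (z : ℂ) : ℂ :=
  ∫ ω, ((X ω : ℂ) - z) * cexp (-(z - X ω) ^ 2 / 2) ∂μ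

theorem gaussConv_ofReal (y : ℝ) :
    gaussConv μ X y = ((∫ ω, rexp (-(y - X ω) ^ 2 / 2) ∂μ : ℝ) : ℂ) := by
  rw [gaussConv, ← integral_complex_ofReal]
  push_cast
  rfl

theorem gaussConvDeriv_ofReal (y : ℝ) :
    gaussConvDeriv μ X y =
      ((∫ ω, (X ω - y) * rexp (-(y - X ω) ^ 2 / 2) ∂μ : ℝ) : ℂ) := by
  rw [gaussConvDeriv, ← integral_complex_ofReal]
  push_cast
  rfl

theorem hasDerivAt_gaussConv [IsFiniteMeasure μ] (hX : Measurable X)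
    (hbd : ∀ᵐ ω ∂μ, |X ω| ≤ A) (z₀ : ℂ) :
    HasDerivAt (gaussConv μ X) (gaussConvDeriv μ X z₀) z₀ := by
  have hF_meas : ∀ z : ℂ, AEStronglyMeasurable (fun ω => cexp (-(z - X ω) ^ 2 / 2)) μ :=
    fun z => by fun_prop
  have hF_int : Integrable (fun ω => cexp (-(z₀ - X ω) ^ 2 / 2)) μ := by
    refine Integrable.of_bound (hF_meas z₀) (rexp (z₀.im ^ 2 / 2)) (ae_of_all _ fun ω => ?_)
    simpa using norm_cexp_neg_sq_div_two_le (z₀ - X ω)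
  have h_bound : ∀ᵐ ω ∂μ, ∀ z ∈ ball z₀ 1,
      ‖((X ω : ℂ) - z) * cexp (-(z - X ω) ^ 2 / 2)‖ ≤
        (A + |0| + (‖z₀‖ + 1)) * rexp ((‖z₀‖ + 1) ^ 2 / 2) := by
    filter_upwards [hbd] with ω hω z hz
    refine norm_sub_mul_cexp_le hω ?_
    rw [Complex.ofReal_zero, sub_zero]
    linarith [norm_le_norm_add_norm_sub' z z₀, mem_ball_iff_norm.1 hz]
  have h_diff : ∀ᵐ ω ∂μ, ∀ z ∈ ball z₀ 1,
      HasDerivAt (fun z => cexp (-(z - X ω) ^ 2 / 2))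
        (((X ω : ℂ) - z) * cexp (-(z - X ω) ^ 2 / 2)) z := by
    refine ae_of_all _ fun ω z _ => ?_
    have h_exponent : HasDerivAt (fun z : ℂ => -(z - X ω) ^ 2 / 2) (X ω - z) z :=
      (((hasDerivAt_id' z).sub_const (X ω : ℂ)).fun_pow 2).fun_neg.div_const 2
        |>.congr_deriv (by ring)
    exact h_exponent.cexp.congr_deriv (mul_comm _ _)
  exact (hasDerivAt_integral_of_dominated_loc_of_deriv_le (ball_mem_nhds z₀ one_pos)
    (Eventually.of_forall hF_meas) hF_int (by fun_prop) h_bound (integrable_const _) h_diff).2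

theorem differentiable_gaussConvDeriv [IsFiniteMeasure μ] (hX : Measurable X)
    (hbd : ∀ᵐ ω ∂μ, |X ω| ≤ A) :
    Differentiable ℂ (gaussConvDeriv μ X) := by
  have hderiv : deriv (gaussConv μ X) = gaussConvDeriv μ X :=
    funext fun z => (hasDerivAt_gaussConv hX hbd z).deriv
  rw [← hderiv]
  exact Differentiable.deriv fun z => (hasDerivAt_gaussConv hX hbd z).differentiableAt

theorem hasDerivAt_integral_exp [IsFiniteMeasure μ] (hX : Measurable X)
    (hbd : ∀ᵐ ω ∂μ, |X ω| ≤ A) (y : ℝ) :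
    HasDerivAt (fun y : ℝ => ∫ ω, rexp (-(y - X ω) ^ 2 / 2) ∂μ)
      (gaussConvDeriv μ X y).re y := by
  simpa [gaussConv_ofReal] using (hasDerivAt_gaussConv hX hbd y).real_of_complex

variable [IsProbabilityMeasure μ]

theorem norm_gaussConvDeriv_le (hbd : ∀ᵐ ω ∂μ, |X ω| ≤ A) {c r : ℝ} {z : ℂ}
    (hz : ‖z - c‖ ≤ r) :
    ‖gaussConvDeriv μ X z‖ ≤ (A + |c| + r) * rexp (r ^ 2 / 2) := by
  simpa [gaussConvDeriv] using
    norm_integral_le_of_norm_le_const (hbd.mono fun ω hω => norm_sub_mul_cexp_le hω hz)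

theorem mul_exp_le_norm_gaussConvDeriv (hX : Measurable X) (hmean : ∫ ω, X ω ∂μ = 0)
    (hbd : ∀ᵐ ω ∂μ, |X ω| ≤ A) :
    A * rexp (-(2 * A ^ 2)) ≤ ‖gaussConvDeriv μ X A‖ := by
  have hXint : Integrable X μ :=
    Integrable.of_bound hX.aestronglyMeasurable A (hbd.mono fun ω hω => by rwa [norm_eq_abs])
  have hint : Integrable (fun ω => (A - X ω) * rexp (-(A - X ω) ^ 2 / 2)) μ := by
    refine Integrable.of_bound (by fun_prop) (2 * A) (hbd.mono fun ω hω => ?_)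
    obtain ⟨h₁, h₂⟩ := abs_le.1 hω
    have hexp : rexp (-(A - X ω) ^ 2 / 2) ≤ 1 := exp_le_one_iff.2 (by nlinarith)
    rw [norm_mul, norm_eq_abs, abs_of_nonneg (by linarith), norm_of_nonneg (exp_pos _).le]
    linarith [mul_le_of_le_one_right (by linarith : 0 ≤ A - X ω) hexp]
  have hpt : ∀ᵐ ω ∂μ,
      rexp (-(2 * A ^ 2)) * (A - X ω) ≤ (A - X ω) * rexp (-(A - X ω) ^ 2 / 2) := by
    filter_upwards [hbd] with ω hω
    obtain ⟨h₁, h₂⟩ := abs_le.1 hω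
    have : rexp (-(2 * A ^ 2)) ≤ rexp (-(A - X ω) ^ 2 / 2) := by
      rw [Real.exp_le_exp]; nlinarith
    rw [mul_comm]
    exact mul_le_mul_of_nonneg_left this (by linarith)
  calc A * rexp (-(2 * A ^ 2)) = ∫ ω, rexp (-(2 * A ^ 2)) * (A - X ω) ∂μ := by
        rw [integral_const_mul, integral_sub (integrable_const A) hXint, hmean]
        simp only [integral_const, probReal_univ, smul_eq_mul, one_mul, sub_zero]; ring
    _ ≤ ∫ ω, (A - X ω) * rexp (-(A - X ω) ^ 2 / 2) ∂μ :=
        integral_mono_ae ((integrable_const A).sub hXint |>.const_mul _) hint hpt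
    _ = -(gaussConvDeriv μ X A).re := by
        rw [gaussConvDeriv_ofReal, Complex.ofReal_re, ← integral_neg]
        congr 1; ext ω; ring
    _ ≤ ‖gaussConvDeriv μ X A‖ := (neg_le_abs _).trans (Complex.abs_re_le_norm _)

theorem exists_card_le_and_pow_mul_le (hX : Measurable X) (hA : 0 < A)
    (hmean : ∫ ω, X ω ∂μ = 0) (hbd : ∀ᵐ ω ∂μ, |X ω| ≤ A) {R s K : ℝ} (hR : 0 ≤ R)
    (hs : 0 < s)
    {S : Finset ℝ} (hSR : ∀ y ∈ S, y ∈ Icc (-R) R)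
    (hSK : ∀ y ∈ S, ∫ ω, rexp (-(y - X ω) ^ 2 / 2) ∂μ = K) :
    ∃ n : ℕ, S.card ≤ n + 1 ∧
      s ^ n * (A * rexp (-(2 * A ^ 2))) ≤
        (2 * A + s * (A + R)) * rexp ((s * (A + R)) ^ 2 / 2) := by
  classical
  obtain ⟨T, hcard, hT⟩ := exists_finset_hasDerivAt_eq_zero (hasDerivAt_integral_exp hX hbd) hSK
  refine ⟨T.card, hcard, ?_⟩
  have hzero : ∀ t ∈ T.image ((↑) : ℝ → ℂ), gaussConvDeriv μ X t = 0 := by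
    simp only [Finset.mem_image]
    rintro _ ⟨ξ, hξ, rfl⟩
    have h₀ := (hT ξ hξ).1
    rw [gaussConvDeriv_ofReal, Complex.ofReal_re] at h₀
    rw [gaussConvDeriv_ofReal, h₀, Complex.ofReal_zero]
  have hnear : ∀ t ∈ T.image ((↑) : ℝ → ℂ), ‖t - A‖ ≤ A + R := by
    simp only [Finset.mem_image]
    rintro _ ⟨ξ, hξ, rfl⟩
    obtain ⟨-, a, ha, b, hb, hab, hba⟩ := hT ξ hξ
    have ha' := (hSR a ha).1
    have hb' := (hSR b hb).2
    rw [← Complex.ofReal_sub, Complex.norm_real, norm_eq_abs, abs_le]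
    constructor <;> linarith
  have hbound : ∀ z ∈ sphere (A : ℂ) (s * (A + R)), ‖gaussConvDeriv μ X z‖ ≤
      (2 * A + s * (A + R)) * rexp ((s * (A + R)) ^ 2 / 2) := fun z hz => by
    simpa [abs_of_pos hA, two_mul] using norm_gaussConvDeriv_le hbd (mem_sphere_iff_norm.1 hz).le
  calc s ^ T.card * (A * rexp (-(2 * A ^ 2)))
      ≤ s ^ (T.image ((↑) : ℝ → ℂ)).card * ‖gaussConvDeriv μ X A‖ := by
        rw [Finset.card_image_of_injective _ Complex.ofReal_injective]
        gcongr
        exact mul_exp_le_norm_gaussConvDeriv hX hmean hbd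
    _ ≤ _ := pow_card_mul_norm_le (differentiable_gaussConvDeriv hX hbd) (by linarith) hs hzero
        hnear hbound

theorem card_le_of_forall_integral_exp_eq (hX : Measurable X) (hA : 0 < A)
    (hmean : ∫ ω, X ω ∂μ = 0) (hbd : ∀ᵐ ω ∂μ, |X ω| ≤ A) {R s K : ℝ} (hR : 0 ≤ R)
    (hs : 1 < s)
    {S : Finset ℝ} (hSR : ∀ y ∈ S, y ∈ Icc (-R) R)
    (hSK : ∀ y ∈ S, ∫ ω, rexp (-(y - X ω) ^ 2 / 2) ∂μ = K) :
    (S.card : ℝ) ≤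
      1 + (((A + R) * s + A) ^ 2 / 2 + 2 * A ^ 2 + log (2 + (A + R) * s / A)) / log s := by
  obtain ⟨n, hcard, hpow⟩ :=
    exists_card_le_and_pow_mul_le hX hA hmean hbd hR (one_pos.trans hs) hSR hSK
  have hn := card_le_of_pow_mul_le hA hR hs hpow
  have hcard' : (S.card : ℝ) ≤ n + 1 := by exact_mod_cast hcard
  linarith

theorem integral_exp_lt_of_lt_abs (hbd : ∀ᵐ ω ∂μ, |X ω| ≤ A) {B y : ℝ} (hB : 0 ≤ B)
    (hy : A + B < |y|) : ∫ ω, rexp (-(y - X ω) ^ 2 / 2) ∂μ < rexp (-B ^ 2 / 2) := by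
  have hpt : ∀ᵐ ω ∂μ, rexp (-(y - X ω) ^ 2 / 2) ≤ rexp (-(|y| - A) ^ 2 / 2) := by
    filter_upwards [hbd] with ω hω
    have h₁ : |y| - A ≤ |y - X ω| := by linarith [abs_sub_abs_le_abs_sub y (X ω)]
    have h₂ : (|y| - A) ^ 2 ≤ (y - X ω) ^ 2 := by
      rw [← sq_abs (y - X ω)]; exact pow_le_pow_left₀ (by linarith) h₁ 2
    rw [exp_le_exp]; linarith
  calc ∫ ω, rexp (-(y - X ω) ^ 2 / 2) ∂μ ≤ ∫ _, rexp (-(|y| - A) ^ 2 / 2) ∂μ :=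
        integral_mono_of_nonneg (ae_of_all _ fun _ => (exp_pos _).le) (integrable_const _) hpt
    _ = rexp (-(|y| - A) ^ 2 / 2) := by simp
    _ < rexp (-B ^ 2 / 2) := by rw [exp_lt_exp]; nlinarith

theorem exp_neg_sqrt_log_sq_div_two {κ : ℝ} (hκ : 0 < κ) (hκ₁ : 2 * π * κ ^ 2 ≤ 1) :
    rexp (-√(log (1 / (2 * π * κ ^ 2))) ^ 2 / 2) = √(2 * π) * κ := by
  have hpos : 0 < 2 * π * κ ^ 2 := by positivity
  rw [sq_sqrt (log_nonneg ((one_le_div hpos).2 hκ₁)), one_div, log_inv, neg_neg]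
  refine (sq_eq_sq₀ (exp_pos _).le (by positivity)).1 ?_
  rw [← exp_nat_mul, mul_pow, sq_sqrt (by positivity)]
  push_cast
  rw [mul_div_cancel₀ _ two_ne_zero, exp_log hpos]

theorem mem_Icc_of_integral_exp_eq (hbd : ∀ᵐ ω ∂μ, |X ω| ≤ A) {κ R y : ℝ}
    (hκ : κ ∈ Ioo 0 (1 / √(2 * π))) (hR : A + √(log (1 / (2 * π * κ ^ 2))) < R)
    (hy : ∫ ω, rexp (-(y - X ω) ^ 2 / 2) ∂μ = √(2 * π) * κ) : y ∈ Icc (-R) R := by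
  obtain ⟨hκ₀, hκ₁⟩ := hκ
  have hκ_sq : 2 * π * κ ^ 2 ≤ 1 := by
    rw [lt_div_iff₀ (by positivity)] at hκ₁
    have := pow_lt_one₀ (by positivity) hκ₁ two_ne_zero
    rw [mul_pow, sq_sqrt (by positivity)] at this
    linarith
  refine abs_le.1 (not_lt.1 fun hRy => ?_)
  have := integral_exp_lt_of_lt_abs hbd (sqrt_nonneg _) (hR.trans hRy)
  rw [exp_neg_sqrt_log_sq_div_two hκ₀ hκ_sq, hy] at this
  exact this.false

end GaussConv

theorem Set.finite_of_forall_finset_card_le {α : Type*} {s : Set α} (N : ℕ)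
    (h : ∀ t : Finset α, ↑t ⊆ s → t.card ≤ N) : s.Finite := by
  by_contra hs
  obtain ⟨t, hts, htN⟩ := Set.Infinite.exists_subset_card_eq hs (N + 1)
  have := h t hts
  omega

/-- for zero-mean `X` with `|X| ≤ A` a.s. (`A > 0`),
`κ ∈ (0, 1/√(2π))` and `R > A + √(log(1/(2πκ²)))`, all real solutions of `f_Y(y) = κ`
lie in `[−R, R]`, they are finitely many, and for every `s > 1` their number is at most
`1 + ( ((A+R)s + A)²/2 + 2A² + log(2 + (A+R)s/A) ) / log s`. -/
theorem stmt_8 {Ω : Type*} [MeasurableSpace Ω] (μ : Measure Ω) [IsProbabilityMeasure μ]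
    (X : Ω → ℝ) (hXmeas : Measurable X) (A : ℝ) (hA : 0 < A)
    (hmean : ∫ ω, X ω ∂μ = 0)
    (hbd : ∀ᵐ ω ∂μ, |X ω| ≤ A)
    (fY : ℝ → ℝ)
    (hfY : ∀ y : ℝ, fY y = (1 / Real.sqrt (2 * π)) * ∫ ω, Real.exp (-(y - X ω) ^ 2 / 2) ∂μ)
    (κ : ℝ) (hκ : κ ∈ Set.Ioo 0 (1 / Real.sqrt (2 * π)))
    (R : ℝ) (hR : A + Real.sqrt (Real.log (1 / (2 * π * κ ^ 2))) < R) :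
    {y : ℝ | fY y = κ} ⊆ Set.Icc (-R) R ∧
    {y : ℝ | fY y = κ}.Finite ∧
    ∀ s : ℝ, 1 < s →
      ({y : ℝ | fY y = κ}.ncard : ℝ) ≤
        1 + (((A + R) * s + A) ^ 2 / 2 + 2 * A ^ 2 +
          Real.log (2 + (A + R) * s / A)) / Real.log s := by
  have hsqrt : 0 < √(2 * π) := by positivity
  have hR₀ : 0 ≤ R := by linarith [sqrt_nonneg (log (1 / (2 * π * κ ^ 2)))]
  have hfY_eq : ∀ y, fY y = κ ↔ ∫ ω, rexp (-(y - X ω) ^ 2 / 2) ∂μ = √(2 * π) * κ :=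
    fun y => by rw [hfY, one_div, inv_mul_eq_iff_eq_mul₀ hsqrt.ne']
  have hsupp : {y : ℝ | fY y = κ} ⊆ Icc (-R) R :=
    fun y hy => mem_Icc_of_integral_exp_eq hbd hκ hR ((hfY_eq y).1 hy)
  have hcard : ∀ s, 1 < s → ∀ S : Finset ℝ, ↑S ⊆ {y : ℝ | fY y = κ} → (S.card : ℝ) ≤
      1 + (((A + R) * s + A) ^ 2 / 2 + 2 * A ^ 2 + log (2 + (A + R) * s / A)) / log s :=
    fun s hs S hS => card_le_of_forall_integral_exp_eq hXmeas hA hmean hbd hR₀ hs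
      (fun y hy => hsupp (hS hy)) (fun y hy => (hfY_eq y).1 (hS hy))
  have hfin : {y : ℝ | fY y = κ}.Finite :=
    Set.finite_of_forall_finset_card_le _ fun S hS =>
      Nat.cast_le.1 ((hcard 2 one_lt_two S hS).trans (Nat.le_ceil _))
  refine ⟨hsupp, hfin, fun s hs => ?_⟩
  rw [Set.ncard_eq_toFinset_card _ hfin]
  exact hcard s hs _ (by simp)
end

section
/- Let n ≥ 2 be an integer and let R be a real random variable with 0 ≤ R ≤ A almost surely (A > 0). For x > 0 define g_n(x) = E[ exp(−(x + R²)/2) · (2^{1−n/2}/(√π Γ((n−1)/2))) ∫₀^π exp(R√x cos θ) sin^{n−2} θ dθ ]. Then g_n is differentiable on (0, ∞) and its derivative is g_n′(x) = (1/2) E[ exp(−(x + R²)/2) · ( R² · (2^{−n/2}/(√π Γ((n+1)/2))) ∫₀^π exp(R√x cos θ) sin^{n} θ dθ − (2^{1−n/2}/(√π Γ((n−1)/2))) ∫₀^π exp(R√x cos θ) sin^{n−2} θ dθ ) ]. -/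
/-!
Differentiate under the expectation and under the `θ`-integral: `R` is a.s. confined to a compact
interval, so joint continuity of the derivatives gives the dominating constants. The derivative of
`u ↦ ∫₀^π e^{u cos θ} sin^m θ dθ` is `∫₀^π cos θ e^{u cos θ} sin^m θ dθ`, and integrating
`d/dθ (e^{u cos θ} sin^{m+1} θ)` over `[0, π]` turns `(m + 1)` times it into
`u ∫₀^π e^{u cos θ} sin^{m+2} θ dθ`. With `u = r √x` and `m = n - 2` the chain rule then produces
`r² / (2(n - 1))` times the order-`n` integral, and `Γ((n + 1)/2) = ((n - 1)/2) Γ((n - 1)/2)`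
absorbs the factor `n - 1` into the order-`n` normalising constant.
-/

open MeasureTheory Real intervalIntegral

theorem hasDerivAt_integral_comp_of_isCompact {Ω : Type*} [MeasurableSpace Ω] {μ : Measure Ω}
    [IsFiniteMeasure μ] {R : Ω → ℝ} (hR : AEMeasurable R μ) {K U : Set ℝ} (hK : IsCompact K)
    (hU : IsOpen U) (hRK : ∀ᵐ ω ∂μ, R ω ∈ K) {φ φ' : ℝ → ℝ → ℝ}
    (hφ : Continuous (Function.uncurry φ)) (hφ' : Continuous (Function.uncurry φ'))
    (hderiv : ∀ r ∈ K, ∀ y ∈ U, HasDerivAt (φ r) (φ' r y) y) {x : ℝ} (hx : x ∈ U) :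
    HasDerivAt (fun y => ∫ ω, φ (R ω) y ∂μ) (∫ ω, φ' (R ω) x ∂μ) x := by
  have hmeas : ∀ {ψ : ℝ → ℝ → ℝ}, Continuous (Function.uncurry ψ) → ∀ y,
      AEStronglyMeasurable (fun ω => ψ (R ω) y) μ := fun hψ y =>
    (hψ.uncurry_right y).comp_aestronglyMeasurable hR.aestronglyMeasurable
  obtain ⟨ε, hε, hball⟩ := Metric.nhds_basis_closedBall.mem_iff.1 (hU.mem_nhds hx)
  obtain ⟨C, hC⟩ := (hK.prod (isCompact_closedBall x ε)).exists_bound_of_continuousOn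
    hφ'.continuousOn
  obtain ⟨D, hD⟩ := hK.exists_bound_of_continuousOn (hφ.uncurry_right x).continuousOn
  have hint : Integrable (fun ω => φ (R ω) x) μ :=
    .of_bound (hmeas hφ x) D (hRK.mono fun ω hω => hD _ hω)
  refine (hasDerivAt_integral_of_dominated_loc_of_deriv_le (Metric.ball_mem_nhds x hε)
    (F' := fun y ω => φ' (R ω) y) (.of_forall (hmeas hφ)) hint (hmeas hφ' x)
    (bound := fun _ => C) ?_ (integrable_const C) ?_).2
  · filter_upwards [hRK] with ω hω y hy
    exact hC (R ω, y) ⟨hω, Metric.ball_subset_closedBall hy⟩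
  · filter_upwards [hRK] with ω hω y hy
    exact hderiv _ hω y (hball (Metric.ball_subset_closedBall hy))

/-- Poisson's integral: `I_ν(u) / u ^ ν = 2 ^ (-ν) / (√π Γ(ν + 1/2)) * poissonIntegral (2ν) u`. -/
noncomputable def poissonIntegral (m : ℕ) (u : ℝ) : ℝ :=
  ∫ θ in (0 : ℝ)..π, exp (u * cos θ) * sin θ ^ m

theorem hasDerivAt_poissonIntegral_integral_cos_mul (m : ℕ) (u : ℝ) :
    HasDerivAt (poissonIntegral m) (∫ θ in (0 : ℝ)..π, cos θ * exp (u * cos θ) * sin θ ^ m) u := by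
  have hderiv : ∀ θ ∈ Set.Icc 0 π, ∀ v ∈ Set.univ,
      HasDerivAt (fun v => exp (v * cos θ) * sin θ ^ m) (cos θ * exp (v * cos θ) * sin θ ^ m) v :=
    fun θ _ v _ => by
    simpa [mul_comm] using ((hasDerivAt_mul_const (cos θ)).exp).mul_const (sin θ ^ m)
  unfold poissonIntegral
  simp only [integral_of_le pi_pos.le]
  exact hasDerivAt_integral_comp_of_isCompact (R := id) aemeasurable_id isCompact_Icc isOpen_univ
    ((ae_restrict_mem measurableSet_Ioc).mono fun _ h => Set.Ioc_subset_Icc_self h)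
    (by fun_prop) (by fun_prop) hderiv trivial

theorem succ_mul_integral_cos_mul_eq_mul_poissonIntegral (m : ℕ) (u : ℝ) :
    ((m : ℝ) + 1) * ∫ θ in (0 : ℝ)..π, cos θ * exp (u * cos θ) * sin θ ^ m
      = u * poissonIntegral (m + 2) u := by
  have hderiv : ∀ θ ∈ Set.uIcc 0 π,
      HasDerivAt (fun θ => exp (u * cos θ) * sin θ ^ (m + 1))
        (((m : ℝ) + 1) * (cos θ * exp (u * cos θ) * sin θ ^ m)
          - u * (exp (u * cos θ) * sin θ ^ (m + 2))) θ := fun θ _ => by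
    refine (((hasDerivAt_cos θ).const_mul u).exp.mul
      ((hasDerivAt_sin θ).fun_pow (m + 1))).congr_deriv ?_
    push_cast
    ring
  have h1 : IntervalIntegrable (fun θ => ((m : ℝ) + 1) * (cos θ * exp (u * cos θ) * sin θ ^ m))
      volume 0 π := (by fun_prop : Continuous _).intervalIntegrable 0 π
  have h2 : IntervalIntegrable (fun θ => u * (exp (u * cos θ) * sin θ ^ (m + 2)))
      volume 0 π := (by fun_prop : Continuous _).intervalIntegrable 0 π
  have := integral_eq_sub_of_hasDerivAt hderiv (h1.sub h2)
  rw [integral_sub h1 h2, intervalIntegral.integral_const_mul,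
    intervalIntegral.integral_const_mul] at this
  simp only [sin_pi, sin_zero, zero_pow m.succ_ne_zero, mul_zero, sub_self] at this
  unfold poissonIntegral
  linarith

theorem hasDerivAt_poissonIntegral (m : ℕ) (u : ℝ) :
    HasDerivAt (poissonIntegral m) (u * poissonIntegral (m + 2) u / (m + 1)) u := by
  rw [← succ_mul_integral_cos_mul_eq_mul_poissonIntegral, mul_div_cancel_left₀ _ (by positivity)]
  exact hasDerivAt_poissonIntegral_integral_cos_mul m u

@[fun_prop]
theorem continuous_poissonIntegral (m : ℕ) : Continuous (poissonIntegral m) :=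
  continuous_iff_continuousAt.2 fun u => (hasDerivAt_poissonIntegral m u).continuousAt

theorem hasDerivAt_poissonIntegral_mul_sqrt (m : ℕ) (r : ℝ) {x : ℝ} (hx : 0 < x) :
    HasDerivAt (fun y => poissonIntegral m (r * √y))
      (r ^ 2 * poissonIntegral (m + 2) (r * √x) / (2 * (m + 1))) x := by
  refine ((hasDerivAt_poissonIntegral m _).comp x
    ((hasDerivAt_sqrt hx.ne').const_mul r)).congr_deriv ?_
  have := sqrt_pos.2 hx
  field_simp

theorem two_rpow_div_Gamma_recurrence {s : ℝ} (hs : 1 < s) :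
    (2 : ℝ) ^ (1 - s / 2) / (√π * Gamma ((s - 1) / 2))
      = (s - 1) * ((2 : ℝ) ^ (-s / 2) / (√π * Gamma ((s + 1) / 2))) := by
  have hpos : 0 < (s - 1) / 2 := by linarith
  rw [show (s + 1) / 2 = (s - 1) / 2 + 1 by ring, Gamma_add_one hpos.ne',
    show 1 - s / 2 = 1 + -s / 2 by ring, rpow_add two_pos, rpow_one]
  have := Gamma_pos_of_pos hpos
  have : s - 1 ≠ 0 := by linarith
  field_simp

theorem hasDerivAt_gaussian_mul_poissonIntegral_sqrt {n : ℕ} (hn : 2 ≤ n) {c₁ c₂ : ℝ}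
    (hc : c₁ = (n - 1) * c₂) (r : ℝ) {x : ℝ} (hx : 0 < x) :
    HasDerivAt (fun y => exp (-(y + r ^ 2) / 2) * c₁ * poissonIntegral (n - 2) (r * √y))
      (1 / 2 * (exp (-(x + r ^ 2) / 2) * (r ^ 2 * c₂ * poissonIntegral n (r * √x)
        - c₁ * poissonIntegral (n - 2) (r * √x)))) x := by
  have hJ := hasDerivAt_poissonIntegral_mul_sqrt (n - 2) r hx
  have hcast : ((n - 2 : ℕ) : ℝ) + 1 = n - 1 := by
    rw [Nat.cast_sub hn]
    ring
  rw [Nat.sub_add_cancel hn, hcast] at hJ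
  have hE : HasDerivAt (fun y => exp (-(y + r ^ 2) / 2)) (exp (-(x + r ^ 2) / 2) * (-1 / 2)) x :=
    (((hasDerivAt_id x).add_const _).neg.div_const 2).exp.congr_deriv (by simp [neg_div])
  refine ((hE.mul_const c₁).mul hJ).congr_deriv ?_
  have : (n : ℝ) - 1 ≠ 0 := sub_ne_zero.2 (Nat.one_lt_cast.2 hn).ne'
  rw [hc]
  field_simp
  ring

theorem stmt_12_general {Ω : Type*} [MeasurableSpace Ω] (μ : Measure Ω) [IsProbabilityMeasure μ]
    (n : ℕ) (hn : 2 ≤ n) (A : ℝ)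
    (R : Ω → ℝ) (hRmeas : Measurable R)
    (hbd : ∀ᵐ ω ∂μ, R ω ∈ Set.Icc 0 A)
    (gn : ℝ → ℝ)
    (hg : ∀ x : ℝ, 0 < x → gn x =
      ∫ ω, (Real.exp (-(x + R ω ^ 2) / 2) *
        ((2 : ℝ) ^ ((1 : ℝ) - (n : ℝ) / 2) / (Real.sqrt π * Real.Gamma (((n : ℝ) - 1) / 2))) *
        ∫ θ in (0 : ℝ)..π, Real.exp (R ω * Real.sqrt x * Real.cos θ) *
          (Real.sin θ) ^ (n - 2)) ∂μ) :
    ∀ x : ℝ, 0 < x →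
      HasDerivAt gn
        ((1 / 2) * ∫ ω, (Real.exp (-(x + R ω ^ 2) / 2) *
          (R ω ^ 2 * ((2 : ℝ) ^ (-(n : ℝ) / 2) / (Real.sqrt π * Real.Gamma (((n : ℝ) + 1) / 2))) *
              (∫ θ in (0 : ℝ)..π, Real.exp (R ω * Real.sqrt x * Real.cos θ) *
                (Real.sin θ) ^ n) -
            ((2 : ℝ) ^ ((1 : ℝ) - (n : ℝ) / 2) / (Real.sqrt π * Real.Gamma (((n : ℝ) - 1) / 2))) *
              ∫ θ in (0 : ℝ)..π, Real.exp (R ω * Real.sqrt x * Real.cos θ) *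
                (Real.sin θ) ^ (n - 2))) ∂μ)
        x := by
  intro x hx
  set c₁ := (2 : ℝ) ^ ((1 : ℝ) - (n : ℝ) / 2) / (√π * Gamma (((n : ℝ) - 1) / 2))
  set c₂ := (2 : ℝ) ^ (-(n : ℝ) / 2) / (√π * Gamma (((n : ℝ) + 1) / 2))
  have hc : c₁ = (n - 1) * c₂ := two_rpow_div_Gamma_recurrence (Nat.one_lt_cast.2 hn)
  have hderiv := hasDerivAt_integral_comp_of_isCompact hRmeas.aemeasurable isCompact_Icc
    isOpen_Ioi hbd
    (φ := fun r y => exp (-(y + r ^ 2) / 2) * c₁ * poissonIntegral (n - 2) (r * √y))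
    (φ' := fun r y => 1 / 2 * (exp (-(y + r ^ 2) / 2) * (r ^ 2 * c₂ * poissonIntegral n (r * √y)
        - c₁ * poissonIntegral (n - 2) (r * √y))))
    (by fun_prop) (by fun_prop)
    (fun r _ _ hy => hasDerivAt_gaussian_mul_poissonIntegral_sqrt hn hc r hy) hx
  rw [MeasureTheory.integral_const_mul] at hderiv
  exact hderiv.congr_of_eventuallyEq (Filter.eventually_of_mem (Ioi_mem_nhds hx) hg)

/-- for `n ≥ 2` and a radius variable `0 ≤ R ≤ A` a.s., the function
`g_n(x) = E[exp(−(x+R²)/2) (2^{1−n/2}/(√π Γ((n−1)/2))) ∫₀^π exp(R√x cos θ) sin^{n−2}θ dθ]`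
is differentiable on `(0, ∞)` with derivative
`g_n′(x) = (1/2) E[exp(−(x+R²)/2) (R² (2^{−n/2}/(√π Γ((n+1)/2))) ∫₀^π exp(R√x cosθ) sin^n θ dθ
  − (2^{1−n/2}/(√π Γ((n−1)/2))) ∫₀^π exp(R√x cosθ) sin^{n−2}θ dθ)]`. -/
theorem stmt_12 {Ω : Type*} [MeasurableSpace Ω] (μ : Measure Ω) [IsProbabilityMeasure μ]
    (n : ℕ) (hn : 2 ≤ n) (A : ℝ) (hA : 0 < A)
    (R : Ω → ℝ) (hRmeas : Measurable R)
    (hbd : ∀ᵐ ω ∂μ, R ω ∈ Set.Icc 0 A)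
    (gn : ℝ → ℝ)
    (hg : ∀ x : ℝ, 0 < x → gn x =
      ∫ ω, (Real.exp (-(x + R ω ^ 2) / 2) *
        ((2 : ℝ) ^ ((1 : ℝ) - (n : ℝ) / 2) / (Real.sqrt π * Real.Gamma (((n : ℝ) - 1) / 2))) *
        ∫ θ in (0 : ℝ)..π, Real.exp (R ω * Real.sqrt x * Real.cos θ) *
          (Real.sin θ) ^ (n - 2)) ∂μ) :
    ∀ x : ℝ, 0 < x →
      HasDerivAt gn
        ((1 / 2) * ∫ ω, (Real.exp (-(x + R ω ^ 2) / 2) *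
          (R ω ^ 2 * ((2 : ℝ) ^ (-(n : ℝ) / 2) / (Real.sqrt π * Real.Gamma (((n : ℝ) + 1) / 2))) *
              (∫ θ in (0 : ℝ)..π, Real.exp (R ω * Real.sqrt x * Real.cos θ) *
                (Real.sin θ) ^ n) -
            ((2 : ℝ) ^ ((1 : ℝ) - (n : ℝ) / 2) / (Real.sqrt π * Real.Gamma (((n : ℝ) - 1) / 2))) *
              ∫ θ in (0 : ℝ)..π, Real.exp (R ω * Real.sqrt x * Real.cos θ) *
                (Real.sin θ) ^ (n - 2))) ∂μ)
        x :=
  stmt_12_general μ n hn A R hRmeas hbd gn hg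
end

section
/- Let n ≥ 2 be an integer, A > 0, and let R be a real random variable with 0 ≤ R ≤ A almost surely. Let G : ℂ → ℂ be the entire function G(z) = (1/2) E[ exp(−(z + R²)/2) · ( R² · (2^{−n/2}/(√π Γ((n+1)/2))) ∫₀^π exp(R√z cos θ) sin^{n} θ dθ − (2^{1−n/2}/(√π Γ((n−1)/2))) ∫₀^π exp(R√z cos θ) sin^{n−2} θ dθ ) ], where √z denotes the principal square root. Let M > 0 and let B be a real number with 0 ≤ B ≤ 2M². Then max_{|z| ≤ M²} |G(z + B/2)| ≤ (γ_n/2) · (A²/(n−1) + 1) · exp((A + √2·M)²/2), where γ_n = √π/(2^{n/2−1} Γ((n−1)/2)). -/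
open MeasureTheory Real intervalIntegral

/-!
The bound is a crude termwise estimate. On the shifted disc, `w = z + B/2` has `‖w‖ ≤ 2M²` and
`Re w ≥ -M²`, so `‖√w‖ ≤ √2 M` and `‖exp(-(w + R²)/2)‖ ≤ exp(M²/2)`; each Poisson-type integral
`∫₀^π exp(R√w cos θ) sinᵏ θ dθ` is at most `π exp(A √2 M)`. By `Γ((n+1)/2) = ((n-1)/2) Γ((n-1)/2)`
the normalising constant `c` in front of the `sinⁿ` integral is `d/(n-1)`, where `d` is the one in
front of the `sinⁿ⁻²` integral and `π d = γₙ`; so `π (A² c + d) = γₙ (A²/(n-1) + 1)`, and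
`M²/2 + √2 M A ≤ (A + √2 M)²/2` finishes.
-/

noncomputable def besselIntegral (s : ℂ) (k : ℕ) : ℂ :=
  ∫ θ in (0 : ℝ)..π, Complex.exp (s * (Real.cos θ : ℂ)) * ((Real.sin θ : ℂ)) ^ k

theorem norm_besselIntegral_le (s : ℂ) (k : ℕ) : ‖besselIntegral s k‖ ≤ π * Real.exp ‖s‖ := by
  have hpoint : ∀ θ ∈ Set.uIoc (0 : ℝ) π,
      ‖Complex.exp (s * (Real.cos θ : ℂ)) * ((Real.sin θ : ℂ)) ^ k‖ ≤ Real.exp ‖s‖ := by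
    intro θ _
    have hexp : ‖Complex.exp (s * (Real.cos θ : ℂ))‖ ≤ Real.exp ‖s‖ := by
      rw [Complex.norm_exp, Real.exp_le_exp]
      calc (s * (Real.cos θ : ℂ)).re ≤ ‖s * (Real.cos θ : ℂ)‖ := Complex.re_le_norm _
        _ = ‖s‖ * |Real.cos θ| := by rw [norm_mul, Complex.norm_real, Real.norm_eq_abs]
        _ ≤ ‖s‖ := mul_le_of_le_one_right (norm_nonneg s) (Real.abs_cos_le_one θ)
    have hsin : ‖((Real.sin θ : ℂ)) ^ k‖ ≤ 1 := by
      rw [norm_pow, Complex.norm_real, Real.norm_eq_abs]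
      exact pow_le_one₀ (abs_nonneg _) (Real.abs_sin_le_one θ)
    simpa [norm_mul] using mul_le_mul hexp hsin (norm_nonneg _) (Real.exp_pos _).le
  unfold besselIntegral
  simpa [abs_of_nonneg Real.pi_pos.le, mul_comm] using norm_integral_le_of_norm_le_const hpoint

theorem norm_cpow_one_half (w : ℂ) : ‖w ^ (1 / 2 : ℂ)‖ = √‖w‖ := by
  rw [Real.sqrt_eq_rpow, ← Complex.norm_cpow_real]
  norm_num

theorem neg_le_re_add_ofReal {z : ℂ} {t K : ℝ} (hz : ‖z‖ ≤ K) (ht : 0 ≤ t) :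
    -K ≤ (z + t).re := by
  rw [Complex.add_re, Complex.ofReal_re]
  linarith [neg_le_of_abs_le ((Complex.abs_re_le_norm z).trans hz)]

theorem norm_cpow_one_half_add_ofReal_le {z : ℂ} {t K : ℝ} (hz : ‖z‖ ≤ K) (ht : 0 ≤ t)
    (htK : t ≤ K) : ‖(z + t) ^ (1 / 2 : ℂ)‖ ≤ √(2 * K) := by
  rw [norm_cpow_one_half]
  refine Real.sqrt_le_sqrt ((norm_add_le _ _).trans ?_)
  rw [Complex.norm_real, Real.norm_of_nonneg ht]
  linarith

theorem norm_exp_neg_add_sq_div_two_le (w : ℂ) (r : ℝ) :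
    ‖Complex.exp (-(w + (r : ℂ) ^ 2) / 2)‖ ≤ Real.exp (-w.re / 2) := by
  rw [Complex.norm_exp, Real.exp_le_exp]
  have hre : (-(w + (r : ℂ) ^ 2) / 2).re = -(w.re + r ^ 2) / 2 := by
    simp [Complex.div_ofNat_re, ← Complex.ofReal_pow]
  rw [hre]
  nlinarith [sq_nonneg r]

theorem norm_bessel_combination_le {w s : ℂ} {r A S c d : ℝ} (hr : 0 ≤ r) (hrA : r ≤ A)
    (hs : ‖s‖ ≤ S) (hc : 0 ≤ c) (hd : 0 ≤ d) (k m : ℕ) :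
    ‖Complex.exp (-(w + (r : ℂ) ^ 2) / 2) *
        ((r : ℂ) ^ 2 * (c : ℂ) * besselIntegral (r * s) k - (d : ℂ) * besselIntegral (r * s) m)‖ ≤
      Real.exp (-w.re / 2) * ((A ^ 2 * c + d) * (π * Real.exp (A * S))) := by
  have hI : ∀ j, ‖besselIntegral (r * s) j‖ ≤ π * Real.exp (A * S) := fun j ↦ by
    refine (norm_besselIntegral_le _ j).trans ?_
    gcongr
    rw [norm_mul, Complex.norm_real, Real.norm_of_nonneg hr]
    exact (mul_le_mul_of_nonneg_left hs hr).trans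
      (mul_le_mul_of_nonneg_right hrA ((norm_nonneg s).trans hs))
  have hcomb : ‖(r : ℂ) ^ 2 * (c : ℂ) * besselIntegral (r * s) k - (d : ℂ) * besselIntegral (r * s) m‖
      ≤ (A ^ 2 * c + d) * (π * Real.exp (A * S)) := by
    refine (norm_sub_le _ _).trans ?_
    simp only [norm_mul, norm_pow, Complex.norm_real, Real.norm_eq_abs, abs_of_nonneg hr,
      abs_of_nonneg hc, abs_of_nonneg hd, add_mul]
    gcongr
    · exact hI k
    · exact hI m
  rw [norm_mul]
  exact mul_le_mul (norm_exp_neg_add_sq_div_two_le w r) hcomb (norm_nonneg _) (Real.exp_pos _).le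

theorem pi_mul_two_rpow_div (ν : ℝ) :
    π * ((2 : ℝ) ^ ((1 : ℝ) - ν / 2) / (√π * Real.Gamma ((ν - 1) / 2))) =
      √π / ((2 : ℝ) ^ (ν / 2 - 1) * Real.Gamma ((ν - 1) / 2)) := by
  have h2 : (2 : ℝ) ^ ((1 : ℝ) - ν / 2) = ((2 : ℝ) ^ (ν / 2 - 1))⁻¹ := by
    rw [← Real.rpow_neg zero_le_two, neg_sub]
  rw [h2]
  have : √π ≠ 0 := (Real.sqrt_pos.mpr Real.pi_pos).ne'
  field_simp
  rw [Real.sq_sqrt Real.pi_pos.le]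

theorem two_rpow_div_gamma_succ {ν : ℝ} (hν : 1 < ν) :
    (2 : ℝ) ^ (-ν / 2) / (√π * Real.Gamma ((ν + 1) / 2)) =
      (2 : ℝ) ^ ((1 : ℝ) - ν / 2) / (√π * Real.Gamma ((ν - 1) / 2)) / (ν - 1) := by
  have hx : 0 < (ν - 1) / 2 := by linarith
  rw [show (ν + 1) / 2 = (ν - 1) / 2 + 1 by ring, Real.Gamma_add_one hx.ne',
    show (1 : ℝ) - ν / 2 = -ν / 2 + 1 by ring, Real.rpow_add two_pos, Real.rpow_one]
  have : ν - 1 ≠ 0 := by linarith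
  field_simp

theorem stmt_14_general {Ω : Type*} [MeasurableSpace Ω] (μ : Measure Ω) [IsProbabilityMeasure μ]
    (n : ℕ) (hn : 2 ≤ n) (A : ℝ)
    (R : Ω → ℝ)
    (hbd : ∀ᵐ ω ∂μ, R ω ∈ Set.Icc 0 A)
    (G : ℂ → ℂ)
    (hG : ∀ z : ℂ, G z = (1 / 2 : ℂ) *
      ∫ ω, (Complex.exp (-(z + ((R ω : ℂ)) ^ 2) / 2) *
        (((R ω : ℂ)) ^ 2 *
            ((((2 : ℝ) ^ (-(n : ℝ) / 2) / (Real.sqrt π * Real.Gamma (((n : ℝ) + 1) / 2)) : ℝ)) : ℂ) *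
            (∫ θ in (0 : ℝ)..π, Complex.exp ((R ω : ℂ) * z ^ (1 / 2 : ℂ) * (Real.cos θ : ℂ)) *
              ((Real.sin θ : ℂ)) ^ n) -
          ((((2 : ℝ) ^ ((1 : ℝ) - (n : ℝ) / 2) /
              (Real.sqrt π * Real.Gamma (((n : ℝ) - 1) / 2)) : ℝ)) : ℂ) *
            ∫ θ in (0 : ℝ)..π, Complex.exp ((R ω : ℂ) * z ^ (1 / 2 : ℂ) * (Real.cos θ : ℂ)) *
              ((Real.sin θ : ℂ)) ^ (n - 2))) ∂μ)
    (M : ℝ) (hM : 0 < M) (B : ℝ) (hB0 : 0 ≤ B) (hB : B ≤ 2 * M ^ 2) :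
    ∀ z : ℂ, ‖z‖ ≤ M ^ 2 →
      ‖G (z + (B / 2 : ℝ))‖ ≤
        (Real.sqrt π / ((2 : ℝ) ^ ((n : ℝ) / 2 - 1) * Real.Gamma (((n : ℝ) - 1) / 2))) / 2 *
          (A ^ 2 / ((n : ℝ) - 1) + 1) *
          Real.exp ((A + Real.sqrt 2 * M) ^ 2 / 2) := by
  intro z hz
  set c : ℝ := (2 : ℝ) ^ (-(n : ℝ) / 2) / (√π * Real.Gamma (((n : ℝ) + 1) / 2))
  set d : ℝ := (2 : ℝ) ^ ((1 : ℝ) - (n : ℝ) / 2) / (√π * Real.Gamma (((n : ℝ) - 1) / 2))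
  set w : ℂ := z + (B / 2 : ℝ)
  have hn1 : (1 : ℝ) < n := by exact_mod_cast hn
  have hd : 0 ≤ d := by positivity [Real.Gamma_pos_of_pos (show 0 < ((n : ℝ) - 1) / 2 by linarith)]
  have hc : c = d / (n - 1) := two_rpow_div_gamma_succ hn1
  have hw_re : -M ^ 2 ≤ w.re := neg_le_re_add_ofReal hz (by positivity)
  have hw_sqrt : ‖w ^ (1 / 2 : ℂ)‖ ≤ √2 * M := by
    rw [← Real.sqrt_sq hM.le, ← Real.sqrt_mul zero_le_two]
    exact norm_cpow_one_half_add_ofReal_le hz (by positivity) (by linarith)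
  have hint := norm_integral_le_of_norm_le_const (μ := μ) <| hbd.mono fun ω ⟨hr, hrA⟩ ↦
    norm_bessel_combination_le (w := w) hr hrA hw_sqrt (hc ▸ div_nonneg hd (by linarith)) hd n (n - 2)
  have hcoeff : π * (A ^ 2 * c + d) =
      √π / ((2 : ℝ) ^ ((n : ℝ) / 2 - 1) * Real.Gamma (((n : ℝ) - 1) / 2)) * (A ^ 2 / (n - 1) + 1) := by
    rw [← pi_mul_two_rpow_div, hc]
    ring
  have hexp : -w.re / 2 + A * (√2 * M) ≤ (A + √2 * M) ^ 2 / 2 := by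
    nlinarith [Real.sq_sqrt zero_le_two]
  rw [probReal_univ, mul_one] at hint
  rw [hG, norm_mul]
  calc ‖(1 / 2 : ℂ)‖ * _
      ≤ 1 / 2 * (Real.exp (-w.re / 2) * ((A ^ 2 * c + d) * (π * Real.exp (A * (√2 * M))))) := by
        rw [show ‖(1 / 2 : ℂ)‖ = 1 / 2 by norm_num]
        exact mul_le_mul_of_nonneg_left hint one_half_pos.le
    _ = π * (A ^ 2 * c + d) / 2 * Real.exp (-w.re / 2 + A * (√2 * M)) := by
        rw [Real.exp_add]; ring
    _ ≤ _ := by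
        rw [hcoeff, mul_div_right_comm]
        gcongr

/-- upper bound on the modulus, over the disc `|z| ≤ M²` shifted by `B/2`,
of the entire extension `G` of the derivative of `g_n`:
`max_{|z|≤M²} |G(z+B/2)| ≤ (γ_n/2)(A²/(n−1)+1) exp((A+√2 M)²/2)` with
`γ_n = √π/(2^{n/2−1} Γ((n−1)/2))`. -/
theorem stmt_14 {Ω : Type*} [MeasurableSpace Ω] (μ : Measure Ω) [IsProbabilityMeasure μ]
    (n : ℕ) (hn : 2 ≤ n) (A : ℝ) (hA : 0 < A)
    (R : Ω → ℝ) (hRmeas : Measurable R)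
    (hbd : ∀ᵐ ω ∂μ, R ω ∈ Set.Icc 0 A)
    (G : ℂ → ℂ)
    (hG : ∀ z : ℂ, G z = (1 / 2 : ℂ) *
      ∫ ω, (Complex.exp (-(z + ((R ω : ℂ)) ^ 2) / 2) *
        (((R ω : ℂ)) ^ 2 *
            ((((2 : ℝ) ^ (-(n : ℝ) / 2) / (Real.sqrt π * Real.Gamma (((n : ℝ) + 1) / 2)) : ℝ)) : ℂ) *
            (∫ θ in (0 : ℝ)..π, Complex.exp ((R ω : ℂ) * z ^ (1 / 2 : ℂ) * (Real.cos θ : ℂ)) *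
              ((Real.sin θ : ℂ)) ^ n) -
          ((((2 : ℝ) ^ ((1 : ℝ) - (n : ℝ) / 2) /
              (Real.sqrt π * Real.Gamma (((n : ℝ) - 1) / 2)) : ℝ)) : ℂ) *
            ∫ θ in (0 : ℝ)..π, Complex.exp ((R ω : ℂ) * z ^ (1 / 2 : ℂ) * (Real.cos θ : ℂ)) *
              ((Real.sin θ : ℂ)) ^ (n - 2))) ∂μ)
    (M : ℝ) (hM : 0 < M) (B : ℝ) (hB0 : 0 ≤ B) (hB : B ≤ 2 * M ^ 2) :
    ∀ z : ℂ, ‖z‖ ≤ M ^ 2 →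
      ‖G (z + (B / 2 : ℝ))‖ ≤
        (Real.sqrt π / ((2 : ℝ) ^ ((n : ℝ) / 2 - 1) * Real.Gamma (((n : ℝ) - 1) / 2))) / 2 *
          (A ^ 2 / ((n : ℝ) - 1) + 1) *
          Real.exp ((A + Real.sqrt 2 * M) ^ 2 / 2) :=
  stmt_14_general μ n hn A R hbd G hG M hM B hB0 hB
end

section
/- Let X be a real random variable with |X| ≤ A almost surely (A > 0), let f_Y(y) = (1/√(2π)) E[exp(−(y−X)²/2)], let λ ∈ [0, 1/2), and fix κ ∈ (0, 1/√(2π)]. Then e^{λy²} f_Y(y) − κ < 0 for every y with |y| > A/(1−2λ) + ( (1/(1−2λ)) log(1/(2πκ²)) + 2λA²/(1−2λ)² )^{1/2}, and the set {y ∈ ℝ : e^{λy²} f_Y(y) = κ} is finite. -/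
/-!
For `|y| ≥ A` every Gaussian factor `exp (-(y - X)² / 2)` is at most `exp (-(|y| - A)² / 2)`;
completing the square in `λ t² - (t - A)² / 2` turns this into the explicit threshold beyond which
`e^{λy²} f_Y(y) < κ`. Writing `exp (-(y - x)² / 2) = exp (-y² / 2) · exp (y x) · exp (-x² / 2)`
exhibits `f_Y` as a Gaussian times the moment generating function of the bounded variable `X`
under the measure `exp (-X² / 2) dμ`, so `e^{λy²} f_Y(y) - κ` is real analytic. It is nonzero far
out, so its zeros are isolated, and they lie in a compact ball: there are finitely many.
-/

open MeasureTheory Real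

open Filter Set in
theorem AnalyticOnNhd.finite_setOf_eq_zero {𝕜 E : Type*} [NontriviallyNormedField 𝕜]
    [PreconnectedSpace 𝕜] [NormedAddCommGroup E] [NormedSpace 𝕜 E] {f : 𝕜 → E}
    (hf : AnalyticOnNhd 𝕜 f univ) {K : Set 𝕜} (hK : IsCompact K) (hzero : {z | f z = 0} ⊆ K)
    {z₀ : 𝕜} (hz₀ : f z₀ ≠ 0) : {z | f z = 0}.Finite := by
  rcases hf.eqOn_zero_or_eventually_ne_zero_of_preconnected isPreconnected_univ with h | h
  · exact absurd (h (mem_univ z₀)) hz₀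
  · exact (hK.finite_sdiff_of_mem_codiscreteWithin (codiscreteWithin_mono (subset_univ K) h)).subset
      fun z hz => ⟨hzero hz, fun hne => hne hz⟩

section GaussianSmoothing

variable {Ω : Type*} [MeasurableSpace Ω] {μ : Measure Ω} {X : Ω → ℝ} {A : ℝ}

theorem ProbabilityTheory.integrableExpSet_eq_univ_of_ae_abs_le [IsFiniteMeasure μ]
    (hX : AEMeasurable X μ) (hbd : ∀ᵐ ω ∂μ, |X ω| ≤ A) : integrableExpSet X μ = Set.univ := by
  refine Set.eq_univ_of_forall fun t => Integrable.of_bound (by fun_prop) (exp (|t| * A)) ?_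
  filter_upwards [hbd] with ω hω
  rw [norm_eq_abs, abs_exp, exp_le_exp]
  calc t * X ω ≤ |t| * |X ω| := (le_abs_self _).trans (abs_mul _ _).le
    _ ≤ |t| * A := by gcongr

theorem ProbabilityTheory.integral_exp_neg_sub_sq_half_eq_mul_mgf (hX : Measurable X) (y : ℝ) :
    ∫ ω, exp (-(y - X ω) ^ 2 / 2) ∂μ =
      exp (-y ^ 2 / 2) * mgf X (μ.withDensity fun ω => ENNReal.ofReal (exp (-X ω ^ 2 / 2))) y := by
  rw [mgf, integral_withDensity_eq_integral_toReal_smul (by fun_prop)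
    (ae_of_all _ fun _ => ENNReal.ofReal_lt_top), ← integral_const_mul]
  congr 1 with ω
  rw [ENNReal.toReal_ofReal (exp_pos _).le, smul_eq_mul, ← exp_add, ← exp_add]
  ring_nf

open ProbabilityTheory in
theorem analyticAt_integral_exp_neg_sub_sq_half [IsFiniteMeasure μ] (hX : Measurable X)
    (hbd : ∀ᵐ ω ∂μ, |X ω| ≤ A) (y : ℝ) :
    AnalyticAt ℝ (fun y => ∫ ω, exp (-(y - X ω) ^ 2 / 2) ∂μ) y := by
  rw [funext (integral_exp_neg_sub_sq_half_eq_mul_mgf (μ := μ) hX)]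
  set ν := μ.withDensity fun ω => ENNReal.ofReal (exp (-X ω ^ 2 / 2))
  have : IsFiniteMeasure ν := isFiniteMeasure_withDensity_ofReal
    (Integrable.of_bound (f := fun ω => exp (-X ω ^ 2 / 2)) (by fun_prop) 1
      (ae_of_all _ fun ω => by
        rw [norm_eq_abs, abs_exp, exp_le_one_iff]
        nlinarith [sq_nonneg (X ω)])).2
  have hν : integrableExpSet X ν = Set.univ :=
    integrableExpSet_eq_univ_of_ae_abs_le hX.aemeasurable
      ((withDensity_absolutelyContinuous _ _).ae_le hbd)
  refine AnalyticAt.mul (by fun_prop) (analyticAt_mgf ?_)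
  simp [hν]

theorem integral_exp_neg_sub_sq_half_le [IsProbabilityMeasure μ] (hbd : ∀ᵐ ω ∂μ, |X ω| ≤ A)
    {y : ℝ} (hy : A ≤ |y|) :
    ∫ ω, exp (-(y - X ω) ^ 2 / 2) ∂μ ≤ exp (-(|y| - A) ^ 2 / 2) := by
  calc ∫ ω, exp (-(y - X ω) ^ 2 / 2) ∂μ ≤ ∫ _, exp (-(|y| - A) ^ 2 / 2) ∂μ :=
        integral_mono_of_nonneg (ae_of_all _ fun _ => (exp_pos _).le) (integrable_const _) ?_
    _ = exp (-(|y| - A) ^ 2 / 2) := by simp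
  filter_upwards [hbd] with ω hω
  have : |y| - A ≤ |y - X ω| := by linarith [abs_sub_abs_le_abs_sub y (X ω)]
  rw [exp_le_exp, neg_div, neg_div, neg_le_neg_iff, ← sq_abs (y - X ω)]
  gcongr

end GaussianSmoothing

theorem exp_mul_sq_mul_gaussian_lt {lam A κ t : ℝ} (hlam : lam < 1 / 2) (hκ : 0 < κ)
    (ht : A / (1 - 2 * lam) +
        Real.sqrt ((1 / (1 - 2 * lam)) * Real.log (1 / (2 * π * κ ^ 2)) +
          2 * lam * A ^ 2 / (1 - 2 * lam) ^ 2) < t) :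
    exp (lam * t ^ 2) * (1 / Real.sqrt (2 * π) * exp (-(t - A) ^ 2 / 2)) < κ := by
  set c := 1 - 2 * lam
  set R := (1 / c) * Real.log (1 / (2 * π * κ ^ 2)) + 2 * lam * A ^ 2 / c ^ 2
  set L := Real.log (Real.sqrt (2 * π) * κ)
  have hc : 0 < c := by linarith
  have hR : R < (t - A / c) ^ 2 :=
    (Real.sqrt_lt' (by linarith [Real.sqrt_nonneg R])).1 (by linarith)
  have hlog : Real.log (1 / (2 * π * κ ^ 2)) = -2 * L := by
    rw [← Real.sq_sqrt (by positivity : (0 : ℝ) ≤ 2 * π), ← mul_pow, one_div, Real.log_inv,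
      Real.log_pow]
    push_cast
    ring
  have hsquare : lam * t ^ 2 - (t - A) ^ 2 / 2 - L = -(c / 2) * ((t - A / c) ^ 2 - R) := by
    simp only [R, hlog]
    field_simp
    simp only [c]
    ring
  have hexponent : lam * t ^ 2 - (t - A) ^ 2 / 2 < L := by nlinarith
  calc exp (lam * t ^ 2) * (1 / Real.sqrt (2 * π) * exp (-(t - A) ^ 2 / 2))
      = exp (lam * t ^ 2 - (t - A) ^ 2 / 2) / Real.sqrt (2 * π) := by
        rw [show lam * t ^ 2 - (t - A) ^ 2 / 2 = lam * t ^ 2 + -(t - A) ^ 2 / 2 by ring, exp_add]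
        ring
    _ < exp L / Real.sqrt (2 * π) := by gcongr
    _ = κ := by
        rw [exp_log (by positivity)]
        field_simp

/-- for `|X| ≤ A` a.s. (`A > 0`), `λ ∈ [0, 1/2)` and `κ ∈ (0, 1/√(2π)]`,
the function `e^{λy²} f_Y(y) − κ` is negative for every
`|y| > A/(1−2λ) + ((1/(1−2λ)) log(1/(2πκ²)) + 2λA²/(1−2λ)²)^{1/2}`, and the level set
`{y | e^{λy²} f_Y(y) = κ}` is finite. -/
theorem stmt_15 {Ω : Type*} [MeasurableSpace Ω] (μ : Measure Ω) [IsProbabilityMeasure μ]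
    (X : Ω → ℝ) (hXmeas : Measurable X) (A : ℝ) (hA : 0 < A)
    (hbd : ∀ᵐ ω ∂μ, |X ω| ≤ A)
    (fY : ℝ → ℝ)
    (hfY : ∀ y : ℝ, fY y = (1 / Real.sqrt (2 * π)) * ∫ ω, Real.exp (-(y - X ω) ^ 2 / 2) ∂μ)
    (lam : ℝ) (hlam : lam ∈ Set.Ico 0 (1 / 2 : ℝ))
    (κ : ℝ) (hκ : κ ∈ Set.Ioc 0 (1 / Real.sqrt (2 * π))) :
    (∀ y : ℝ,
      A / (1 - 2 * lam) +
        Real.sqrt ((1 / (1 - 2 * lam)) * Real.log (1 / (2 * π * κ ^ 2)) +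
          2 * lam * A ^ 2 / (1 - 2 * lam) ^ 2) < |y| →
      Real.exp (lam * y ^ 2) * fY y - κ < 0) ∧
    {y : ℝ | Real.exp (lam * y ^ 2) * fY y = κ}.Finite := by
  set M := A / (1 - 2 * lam) +
    Real.sqrt ((1 / (1 - 2 * lam)) * Real.log (1 / (2 * π * κ ^ 2)) +
      2 * lam * A ^ 2 / (1 - 2 * lam) ^ 2)
  have hAM : A ≤ M := (le_div_self hA.le (by linarith [hlam.2]) (by linarith [hlam.1])).trans
    (le_add_of_nonneg_right (Real.sqrt_nonneg _))
  have htail : ∀ y, M < |y| → exp (lam * y ^ 2) * fY y - κ < 0 := by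
    intro y hy
    rw [hfY, sub_neg, ← sq_abs y]
    calc exp (lam * |y| ^ 2) * (1 / √(2 * π) * ∫ ω, exp (-(y - X ω) ^ 2 / 2) ∂μ)
        ≤ exp (lam * |y| ^ 2) * (1 / √(2 * π) * exp (-(|y| - A) ^ 2 / 2)) := by
          gcongr
          exact integral_exp_neg_sub_sq_half_le hbd (by linarith)
      _ < κ := exp_mul_sq_mul_gaussian_lt hlam.2 hκ.1 hy
  refine ⟨htail, ?_⟩
  have hanalytic : AnalyticOnNhd ℝ (fun y => exp (lam * y ^ 2) * fY y - κ) Set.univ :=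
    fun y _ => by
      simp_rw [hfY]
      have := analyticAt_integral_exp_neg_sub_sq_half hXmeas hbd y
      fun_prop
  have hzero : {y | exp (lam * y ^ 2) * fY y - κ = 0} ⊆ Metric.closedBall 0 M := fun y hy => by
    simpa using not_lt.1 fun h => (htail y h).ne hy
  have hfar : exp (lam * (M + 1) ^ 2) * fY (M + 1) - κ ≠ 0 :=
    (htail (M + 1) (by rw [abs_of_pos (by linarith)]; linarith)).ne
  simpa only [sub_eq_zero] using
    hanalytic.finite_setOf_eq_zero (isCompact_closedBall 0 M) hzero hfar
end

section
/- Let X be a real random variable with E[X] = 0 and |X| ≤ A almost surely (A > 0), let λ ∈ [0, 1/2), and define the entire function F_λ(z) = e^{λz²} · (1/√(2π)) · ( E[(X − z) exp(−(z − X)²/2)] + 2λz · E[exp(−(z − X)²/2)] ) for z ∈ ℂ. Then |F_λ(A/(1−2λ))| ≥ (A/√(2π)) · exp(−(1/2 + 3/(2−4λ)) A²); consequently, for every B ≥ A/(1−2λ), the maximum of |F_λ(z)| over the closed disc {|z| ≤ B} is at least (A/√(2π)) exp(−(1/2 + 3/(2−4λ)) A²). -/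
/-!
At the real point `y = A / (1 - 2λ)` the two integrals defining `F_λ` merge into
`∫ (X - A) e^{-(y - X)²/2} dμ`, whose integrand has constant sign. Since `(y - X)² ≤ (y + A)²`
and `E[A - X] = A`, this gives `|F_λ(y)| ≥ e^{λy²} A e^{-(y + A)²/2} / √(2π)`, and the exponent
simplifies to `-(1/2 + 3/(2 - 4λ)) A²`. On a closed disc `|F_λ|` is bounded, so its supremum
there dominates the value at `y` as soon as `y` lies in the disc.
-/

open MeasureTheory Real

/-- `F_λ(z) = e^{λz²} (f_Y'(z) + 2λz f_Y(z))`, with the integrals of `f_Y'` and `f_Y` merged. -/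
noncomputable def tiltedDensityDeriv {Ω : Type*} [MeasurableSpace Ω] (μ : Measure Ω) (X : Ω → ℝ)
    (lam : ℝ) (z : ℂ) : ℂ :=
  Complex.exp (lam * z ^ 2) * ((1 / √(2 * π) : ℝ) : ℂ) *
    ∫ ω, ((X ω : ℂ) - (1 - 2 * lam) * z) * Complex.exp (-(z - X ω) ^ 2 / 2) ∂μ

section

variable {Ω : Type*} [MeasurableSpace Ω] {μ : Measure Ω} {X : Ω → ℝ} {A lam : ℝ}

lemma integrable_comp_of_ae_abs_le {E : Type*} [NormedAddCommGroup E] [IsFiniteMeasure μ]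
    {g : ℝ → E} (hg : Continuous g) (hX : Measurable X) (hbd : ∀ᵐ ω ∂μ, |X ω| ≤ A) :
    Integrable (fun ω => g (X ω)) μ := by
  obtain ⟨C, hC⟩ := (isCompact_Icc (a := -A) (b := A)).exists_bound_of_continuousOn
    hg.continuousOn
  refine .of_bound (hg.comp_aestronglyMeasurable hX.aestronglyMeasurable) C ?_
  filter_upwards [hbd] with ω hω using hC _ (abs_le.mp hω)

lemma mul_exp_le_integral_sub_mul_exp [IsProbabilityMeasure μ] (hX : Measurable X)
    (hmean : ∫ ω, X ω ∂μ = 0) (hbd : ∀ᵐ ω ∂μ, |X ω| ≤ A) {y : ℝ} (hy : 0 ≤ y) :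
    A * exp (-(y + A) ^ 2 / 2) ≤ ∫ ω, (A - X ω) * exp (-(y - X ω) ^ 2 / 2) ∂μ := by
  have hXint : Integrable X μ := integrable_comp_of_ae_abs_le continuous_id hX hbd
  have hmean_shift : ∫ ω, (A - X ω) * exp (-(y + A) ^ 2 / 2) ∂μ = A * exp (-(y + A) ^ 2 / 2) := by
    rw [integral_mul_const, integral_sub (integrable_const A) hXint, hmean, integral_const,
      probReal_univ, one_smul, sub_zero]
  rw [← hmean_shift]
  refine integral_mono_ae (((integrable_const A).sub hXint).mul_const _)
    (integrable_comp_of_ae_abs_le (g := fun x => (A - x) * exp (-(y - x) ^ 2 / 2))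
    (by fun_prop) hX hbd) ?_
  filter_upwards [hbd] with ω hω
  obtain ⟨hlo, hhi⟩ := abs_le.mp hω
  refine mul_le_mul_of_nonneg_left (exp_le_exp.mpr ?_) (by linarith)
  nlinarith

lemma integral_sub_mul_cexp_add_mul_integral_cexp [IsFiniteMeasure μ] (hX : Measurable X)
    (hbd : ∀ᵐ ω ∂μ, |X ω| ≤ A) (c z : ℂ) :
    (∫ ω, ((X ω : ℂ) - z) * Complex.exp (-(z - X ω) ^ 2 / 2) ∂μ) +
        c * z * ∫ ω, Complex.exp (-(z - X ω) ^ 2 / 2) ∂μ =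
      ∫ ω, ((X ω : ℂ) - (1 - c) * z) * Complex.exp (-(z - X ω) ^ 2 / 2) ∂μ := by
  rw [← integral_const_mul, ← integral_add
    (integrable_comp_of_ae_abs_le (g := fun x : ℝ => ((x : ℂ) - z) * Complex.exp (-(z - x) ^ 2 / 2))
      (by fun_prop) hX hbd)
    (integrable_comp_of_ae_abs_le (g := fun x : ℝ => c * z * Complex.exp (-(z - x) ^ 2 / 2))
      (by fun_prop) hX hbd)]
  congr 1 with ω
  ring

lemma tiltedDensityDeriv_ofReal (y : ℝ) :
    tiltedDensityDeriv μ X lam y = ↑(exp (lam * y ^ 2) / √(2 * π) *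
      ∫ ω, (X ω - (1 - 2 * lam) * y) * exp (-(y - X ω) ^ 2 / 2) ∂μ) := by
  rw [tiltedDensityDeriv, Complex.ofReal_mul, ← integral_complex_ofReal]
  push_cast
  ring

lemma le_norm_tiltedDensityDeriv [IsProbabilityMeasure μ] (hX : Measurable X)
    (hmean : ∫ ω, X ω ∂μ = 0) (hbd : ∀ᵐ ω ∂μ, |X ω| ≤ A) (hA : 0 ≤ A) (hlam : lam < 1 / 2) :
    A / √(2 * π) * exp (-((1 / 2 + 3 / (2 - 4 * lam)) * A ^ 2)) ≤
      ‖tiltedDensityDeriv μ X lam ↑(A / (1 - 2 * lam))‖ := by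
  have ht : 0 < 1 - 2 * lam := by linarith
  have hexponent : lam * (A / (1 - 2 * lam)) ^ 2 + -(A / (1 - 2 * lam) + A) ^ 2 / 2 =
      -((1 / 2 + 3 / (2 - 4 * lam)) * A ^ 2) := by
    obtain ⟨t, rfl⟩ : ∃ t, lam = (1 - t) / 2 := ⟨1 - 2 * lam, by ring⟩
    rw [show 1 - 2 * ((1 - t) / 2) = t by ring, show 2 - 4 * ((1 - t) / 2) = 2 * t by ring] at *
    field_simp
    ring
  set y := A / (1 - 2 * lam)
  have hyA : (1 - 2 * lam) * y = A := mul_div_cancel₀ A ht.ne'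
  have hintegral : ∫ ω, (X ω - (1 - 2 * lam) * y) * exp (-(y - X ω) ^ 2 / 2) ∂μ =
      -∫ ω, (A - X ω) * exp (-(y - X ω) ^ 2 / 2) ∂μ := by
    rw [hyA, ← integral_neg]
    congr 1 with ω
    ring
  have hlower := mul_exp_le_integral_sub_mul_exp hX hmean hbd (div_nonneg hA ht.le)
  have hI_nonneg := (mul_nonneg hA (exp_pos _).le).trans hlower
  rw [tiltedDensityDeriv_ofReal, Complex.norm_real, norm_eq_abs, hintegral, mul_neg, abs_neg,
    abs_of_nonneg (mul_nonneg (by positivity) hI_nonneg)]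
  calc A / √(2 * π) * exp (-((1 / 2 + 3 / (2 - 4 * lam)) * A ^ 2))
      = exp (lam * y ^ 2) / √(2 * π) * (A * exp (-(y + A) ^ 2 / 2)) := by
        rw [← hexponent, exp_add]; ring
    _ ≤ _ := by gcongr

lemma norm_tiltedDensityDeriv_le [IsProbabilityMeasure μ] (hbd : ∀ᵐ ω ∂μ, |X ω| ≤ A) {B : ℝ}
    {z : ℂ} (hz : ‖z‖ ≤ B) :
    ‖tiltedDensityDeriv μ X lam z‖ ≤
      exp (|lam| * B ^ 2) / √(2 * π) * ((A + |1 - 2 * lam| * B) * exp ((B + A) ^ 2 / 2)) := by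
  have hfactor : ‖Complex.exp (lam * z ^ 2)‖ ≤ exp (|lam| * B ^ 2) := by
    refine (Complex.norm_exp_le_exp_norm _).trans (exp_le_exp.mpr ?_)
    rw [norm_mul, norm_pow, Complex.norm_real, norm_eq_abs]
    gcongr
  have hintegrand : ∀ᵐ ω ∂μ, ‖((X ω : ℂ) - (1 - 2 * lam) * z) * Complex.exp (-(z - X ω) ^ 2 / 2)‖
      ≤ (A + |1 - 2 * lam| * B) * exp ((B + A) ^ 2 / 2) := by
    filter_upwards [hbd] with ω hω
    have hzX : ‖z - X ω‖ ≤ B + A :=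
      (norm_sub_le _ _).trans (add_le_add hz (by rwa [Complex.norm_real, norm_eq_abs]))
    have hlinear : ‖(X ω : ℂ) - (1 - 2 * lam) * z‖ ≤ A + |1 - 2 * lam| * B := by
      refine (norm_sub_le _ _).trans (add_le_add (by rwa [Complex.norm_real, norm_eq_abs]) ?_)
      rw [norm_mul, ← Complex.ofReal_ofNat, ← Complex.ofReal_mul, ← Complex.ofReal_one,
        ← Complex.ofReal_sub, Complex.norm_real, norm_eq_abs]
      gcongr
    have hkernel : ‖Complex.exp (-(z - X ω) ^ 2 / 2)‖ ≤ exp ((B + A) ^ 2 / 2) := by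
      refine (Complex.norm_exp_le_exp_norm _).trans (exp_le_exp.mpr ?_)
      rw [norm_div, norm_neg, norm_pow, Complex.norm_two]
      gcongr
    rw [norm_mul]
    exact mul_le_mul hlinear hkernel (norm_nonneg _) ((norm_nonneg _).trans hlinear)
  have hintegral := norm_integral_le_of_norm_le_const hintegrand
  rw [probReal_univ, mul_one] at hintegral
  rw [tiltedDensityDeriv, norm_mul, norm_mul, Complex.norm_real, norm_eq_abs,
    abs_of_nonneg (by positivity), mul_one_div]
  gcongr

end

/-- for zero-mean `X` with `|X| ≤ A` a.s. (`A > 0`) and `λ ∈ [0, 1/2)`, the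
entire function `F_λ(z) = e^{λz²} (1/√(2π)) (E[(X−z) exp(−(z−X)²/2)] + 2λz E[exp(−(z−X)²/2)])`
satisfies `|F_λ(A/(1−2λ))| ≥ (A/√(2π)) exp(−(1/2 + 3/(2−4λ))A²)`; consequently, for every
`B ≥ A/(1−2λ)`, the maximum of `|F_λ|` over the closed disc `|z| ≤ B` is at least that bound. -/
theorem stmt_17 {Ω : Type*} [MeasurableSpace Ω] (μ : Measure Ω) [IsProbabilityMeasure μ]
    (X : Ω → ℝ) (hXmeas : Measurable X) (A : ℝ) (hA : 0 < A)
    (hmean : ∫ ω, X ω ∂μ = 0)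
    (hbd : ∀ᵐ ω ∂μ, |X ω| ≤ A)
    (lam : ℝ) (hlam : lam ∈ Set.Ico 0 (1 / 2 : ℝ))
    (F : ℂ → ℂ)
    (hF : ∀ z : ℂ, F z = Complex.exp ((lam : ℂ) * z ^ 2) *
      ((1 / Real.sqrt (2 * π) : ℝ) : ℂ) *
      ((∫ ω, ((X ω : ℂ) - z) * Complex.exp (-(z - (X ω : ℂ)) ^ 2 / 2) ∂μ) +
        2 * (lam : ℂ) * z * ∫ ω, Complex.exp (-(z - (X ω : ℂ)) ^ 2 / 2) ∂μ)) :
    (A / Real.sqrt (2 * π)) * Real.exp (-((1 / 2 + 3 / (2 - 4 * lam)) * A ^ 2)) ≤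
      ‖F ((A / (1 - 2 * lam) : ℝ) : ℂ)‖ ∧
    ∀ B : ℝ, A / (1 - 2 * lam) ≤ B →
      (A / Real.sqrt (2 * π)) * Real.exp (-((1 / 2 + 3 / (2 - 4 * lam)) * A ^ 2)) ≤
        sSup ((fun z => ‖F z‖) '' Metric.closedBall (0 : ℂ) B) := by
  obtain rfl : F = tiltedDensityDeriv μ X lam := by
    funext z
    rw [hF, tiltedDensityDeriv, integral_sub_mul_cexp_add_mul_integral_cexp hXmeas hbd]
  have hlower := le_norm_tiltedDensityDeriv hXmeas hmean hbd hA.le hlam.2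
  refine ⟨hlower, fun B hB => hlower.trans (le_csSup ?_ ⟨_, ?_, rfl⟩)⟩
  · exact ⟨_, Set.forall_mem_image.2 fun z hz =>
      norm_tiltedDensityDeriv_le hbd (mem_closedBall_zero_iff.1 hz)⟩
  · rw [mem_closedBall_zero_iff, Complex.norm_real, norm_eq_abs,
      abs_of_nonneg (div_nonneg hA.le (by linarith [hlam.2]))]
    exact hB
end
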